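/- arXiv:1403.7480 — 6 statements merged into one kernel-verified Lean document; each statement's English description precedes it below -/
import Mathlib

section
/- Let α be a nonzero algebraic number with primitive minimal polynomial M_α ∈ ℤ[x], and let S ⊆ ℂ be a finite set with ℤ[α] = S[α]. Then for each j ∈ {0, 1, …, |M_α(0)| − 1} there exists a polynomial P_j ∈ ℤ[x] with P_j(α) ∈ S and P_j(0) ≡ j (mod M_α(0)), and the elements P_0(α), …, P_{|M_α(0)|−1}(α) are pairwise distinct; consequently Card(S) ≥ max{2, |M_α(0)|}. -/
/-! If `P(α) = Q(α)` for integer polynomials, Gauss's lemma makes the primitive minimal polynomial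
`M` divide `P - Q`, so `P(0) ≡ Q(0) [ZMOD M(0)]`. Expanding an integer `j ∈ ℤ[α] = S[α]` as
`Σ fᵢ αⁱ` and lifting every digit `fᵢ ∈ S ⊆ ℤ[α]` to an integer polynomial, the digit `f₀ = P_j(α)`
satisfies `P_j(0) ≡ j`; digits attached to distinct residues are therefore distinct.
A single digit `s` cannot work: `0 = s (1 + α + ⋯ + α^N)` makes the partial geometric sums of `α`
periodic, so `{s}[α]` would be finite, whereas `ℤ[α] ⊇ ℤ` is not. -/

open Polynomial

/-- `ℤ[α]`: the set of values `P(α)` for `P ∈ ℤ[x]`. -/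
def Zadj (α : ℂ) : Set ℂ := {z | ∃ P : ℤ[X], aeval α P = z}

/-- `F[α]`: the set of all sums `Σ_{j=0}^{n} f_j α^j` with `n ∈ ℕ` and `f_0, …, f_n ∈ F`. -/
def repSet (α : ℂ) (F : Set ℂ) : Set ℂ :=
  {z | ∃ (n : ℕ) (f : ℕ → ℂ), (∀ j ≤ n, f j ∈ F) ∧
    z = ∑ j ∈ Finset.range (n + 1), f j * α ^ j}

/-- `M` is the minimal polynomial of `α` over `ℚ`, normalized to be a primitive polynomial
with integer coefficients. -/
def IsPrimMinPoly (α : ℂ) (M : ℤ[X]) : Prop :=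
  M.IsPrimitive ∧ ∃ c : ℚ, c ≠ 0 ∧ M.map (Int.castRingHom ℚ) = C c * minpoly ℚ α

theorem Int.natCast_eq_of_modEq_of_lt_natAbs {i j : ℕ} {m : ℤ} (h : (i : ℤ) ≡ j [ZMOD m])
    (hi : i < m.natAbs) (hj : j < m.natAbs) : i = j :=
  (Int.natCast_modEq_iff.mp (Int.modEq_natAbs.mpr h)).eq_of_lt_of_lt hi hj

theorem Function.Periodic.finite_range_nat {X : Type*} {f : ℕ → X} {N : ℕ}
    (hf : Function.Periodic f N) (hN : 0 < N) : (Set.range f).Finite := by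
  refine ((Set.finite_Iio N).image f).subset ?_
  rintro _ ⟨n, rfl⟩
  exact ⟨n % N, Nat.mod_lt n hN, hf.map_mod_nat n⟩

theorem periodic_geom_sum_of_geom_sum_eq_zero {R : Type*} [Semiring R] {x : R} {N : ℕ}
    (h : ∑ i ∈ Finset.range N, x ^ i = 0) :
    Function.Periodic (fun n => ∑ i ∈ Finset.range n, x ^ i) N := by
  intro n
  simp only [Finset.sum_range_add, pow_add, ← Finset.mul_sum, h, mul_zero, add_zero]

theorem Zadj_eq_range (α : ℂ) : Zadj α = (aeval α : ℤ[X] →ₐ[ℤ] ℂ).range := rfl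

theorem Zadj_infinite (α : ℂ) : (Zadj α).Infinite :=
  (Set.infinite_range_of_injective Int.cast_injective).mono
    (by rintro _ ⟨j, rfl⟩; exact ⟨C j, aeval_C α j⟩)

theorem subset_repSet (α : ℂ) (F : Set ℂ) : F ⊆ repSet α F :=
  fun s hs => ⟨0, fun _ => s, fun _ _ => hs, by simp⟩

theorem exists_aeval_add_X_mul_of_mem_repSet {α : ℂ} {F : Set ℂ} (hF : F ⊆ Zadj α) {z : ℂ}
    (hz : z ∈ repSet α F) : ∃ Q R : ℤ[X], aeval α Q ∈ F ∧ aeval α (Q + X * R) = z := by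
  obtain ⟨n, f, hf, rfl⟩ := hz
  obtain ⟨Q, hQ⟩ := hF (hf 0 n.zero_le)
  have htail : ∑ i ∈ Finset.range n, f (i + 1) * α ^ i ∈ Zadj α := by
    rw [Zadj_eq_range]
    refine Subalgebra.sum_mem _ fun i hi => Subalgebra.mul_mem _ ?_ (Subalgebra.pow_mem _ ?_ _)
    · exact (Zadj_eq_range α ▸ hF) (hf (i + 1) (by simp at hi; omega))
    · exact ⟨X, aeval_X α⟩
  obtain ⟨R, hR⟩ := htail
  refine ⟨Q, R, hQ ▸ hf 0 n.zero_le, ?_⟩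
  rw [Finset.sum_range_succ', map_add, map_mul, aeval_X, hR, hQ, pow_zero, mul_one, add_comm,
    Finset.mul_sum]
  exact congrArg (· + f 0) (Finset.sum_congr rfl fun i _ => by ring)

theorem repSet_singleton_subset (α s : ℂ) :
    repSet α {s} ⊆ Set.range fun n => s * ∑ i ∈ Finset.range (n + 1), α ^ i := by
  rintro _ ⟨n, f, hf, rfl⟩
  refine ⟨n, ?_⟩
  simp only [Finset.mul_sum]
  exact Finset.sum_congr rfl fun i hi => by
    rw [hf i (Nat.lt_succ_iff.mp (Finset.mem_range.mp hi))]

theorem repSet_singleton_finite {α s : ℂ} (hs : s ≠ 0) (h0 : 0 ∈ repSet α {s}) :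
    (repSet α {s}).Finite := by
  obtain ⟨N, hN⟩ := repSet_singleton_subset α s h0
  have hperiodic :=
    periodic_geom_sum_of_geom_sum_eq_zero (x := α) (N := N + 1) (by simpa [hs] using hN)
  refine ((hperiodic.finite_range_nat N.succ_pos).image (s * ·)).subset
    ((repSet_singleton_subset α s).trans ?_)
  rintro _ ⟨n, rfl⟩
  exact ⟨_, ⟨n + 1, rfl⟩, rfl⟩

theorem two_le_card_of_repSet_eq_Zadj {α : ℂ} {S : Finset ℂ} (hS : repSet α S = Zadj α) :
    2 ≤ S.card := by
  have hmem : ∀ z : ℤ, (z : ℂ) ∈ repSet α S := fun z => hS ▸ ⟨C z, aeval_C α z⟩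
  obtain ⟨n, f, hf, -⟩ := hmem 0
  by_contra! hcard
  obtain ⟨s, rfl⟩ := Finset.card_eq_one.mp
    (le_antisymm (by omega) (Finset.card_pos.mpr ⟨f 0, hf 0 n.zero_le⟩))
  rw [Finset.coe_singleton] at hS hmem
  obtain ⟨k, hk⟩ := repSet_singleton_subset α s (hmem 1)
  have hs : s ≠ 0 := by rintro rfl; simp at hk
  exact Zadj_infinite α (hS ▸ repSet_singleton_finite hs (by simpa using hmem 0))

namespace IsPrimMinPoly

variable {α : ℂ} {M : ℤ[X]}

theorem dvd_of_aeval_eq_zero (hM : IsPrimMinPoly α M) {P : ℤ[X]} (hP : aeval α P = 0) :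
    M ∣ P := by
  obtain ⟨hprim, c, hc, hmap⟩ := hM
  have hminpoly : minpoly ℚ α ∣ P.map (Int.castRingHom ℚ) :=
    minpoly.dvd ℚ α (by rwa [← algebraMap_int_eq, aeval_map_algebraMap])
  rw [IsPrimitive.Int.dvd_iff_map_cast_dvd_map_cast M P hprim, hmap]
  exact (isUnit_C.mpr hc.isUnit).mul_left_dvd.mpr hminpoly

theorem eval_zero_modEq_of_aeval_eq (hM : IsPrimMinPoly α M) {P Q : ℤ[X]}
    (h : aeval α P = aeval α Q) : P.eval 0 ≡ Q.eval 0 [ZMOD M.eval 0] := by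
  rw [Int.modEq_iff_dvd, ← eval_sub]
  exact eval_dvd (hM.dvd_of_aeval_eq_zero (by rw [map_sub, h, sub_self]))

theorem exists_aeval_mem_eval_zero_modEq (hM : IsPrimMinPoly α M) {F : Set ℂ}
    (hF : repSet α F = Zadj α) (j : ℤ) :
    ∃ P : ℤ[X], aeval α P ∈ F ∧ P.eval 0 ≡ j [ZMOD M.eval 0] := by
  obtain ⟨Q, R, hQ, hQR⟩ := exists_aeval_add_X_mul_of_mem_repSet (hF ▸ subset_repSet α F)
    (hF ▸ ⟨C j, aeval_C α j⟩ : (j : ℂ) ∈ repSet α F)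
  refine ⟨Q, hQ, ?_⟩
  simpa using hM.eval_zero_modEq_of_aeval_eq (hQR.trans (aeval_C α j).symm)

end IsPrimMinPoly

theorem digit_set_contains_residues_general (α : ℂ)
    (M : ℤ[X]) (hM : IsPrimMinPoly α M)
    (S : Finset ℂ) (hS : repSet α ↑S = Zadj α) :
    (∃ P : ℕ → ℤ[X],
      (∀ j < (M.eval 0).natAbs,
        aeval α (P j) ∈ (S : Set ℂ) ∧ Int.ModEq (M.eval 0) ((P j).eval 0) (j : ℤ)) ∧
      (∀ i < (M.eval 0).natAbs, ∀ j < (M.eval 0).natAbs,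
        i ≠ j → aeval α (P i) ≠ aeval α (P j))) ∧
    max 2 (M.eval 0).natAbs ≤ S.card := by
  choose P hPS hPmod using fun j : ℕ => hM.exists_aeval_mem_eval_zero_modEq hS j
  have hinj : ∀ i < (M.eval 0).natAbs, ∀ j < (M.eval 0).natAbs,
      i ≠ j → aeval α (P i) ≠ aeval α (P j) := fun i hi j hj hij heq =>
    hij <| Int.natCast_eq_of_modEq_of_lt_natAbs
      (((hPmod i).symm.trans (hM.eval_zero_modEq_of_aeval_eq heq)).trans (hPmod j)) hi hj
  have hcard : (M.eval 0).natAbs ≤ S.card := by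
    simpa using Finset.card_le_card_of_injOn (s := Finset.range (M.eval 0).natAbs)
      (fun i => aeval α (P i)) (fun i _ => hPS i) fun i hi j hj heq =>
        by_contra fun hij => hinj i (by simpa using hi) j (by simpa using hj) hij heq
  exact ⟨⟨P, fun j _ => ⟨hPS j, hPmod j⟩, hinj⟩, max_le (two_le_card_of_repSet_eq_Zadj hS) hcard⟩

/-- Let `α` be a nonzero algebraic number with primitive minimal polynomial `M`, and `S ⊆ ℂ`
finite with `ℤ[α] = S[α]`.  Then for each `j < |M(0)|` there is `P_j ∈ ℤ[x]` with
`P_j(α) ∈ S`, `P_j(0) ≡ j (mod M(0))`, the values `P_j(α)` pairwise distinct; consequently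
`Card(S) ≥ max{2, |M(0)|}`. -/
theorem digit_set_contains_residues (α : ℂ) (hα : IsAlgebraic ℚ α) (h0 : α ≠ 0)
    (M : ℤ[X]) (hM : IsPrimMinPoly α M)
    (S : Finset ℂ) (hS : repSet α ↑S = Zadj α) :
    (∃ P : ℕ → ℤ[X],
      (∀ j < (M.eval 0).natAbs,
        aeval α (P j) ∈ (S : Set ℂ) ∧ Int.ModEq (M.eval 0) ((P j).eval 0) (j : ℤ)) ∧
      (∀ i < (M.eval 0).natAbs, ∀ j < (M.eval 0).natAbs,
        i ≠ j → aeval α (P i) ≠ aeval α (P j))) ∧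
    max 2 (M.eval 0).natAbs ≤ S.card :=
  digit_set_contains_residues_general α M hM S hS
end

section
/- Let α be an algebraic number with |M_α(1)| = 1. Then α ∉ 𝓕_{|M_α(0)|}; in particular, there is no finite set S ⊆ ℂ with Card(S) = |M_α(0)| and ℤ[α] = S[α]. -/
open Polynomial

/-- `α ∈ 𝓕_N`: the minimal cardinality of a finite `S ⊆ ℂ` with `ℤ[α] = S[α]` equals `N`. -/
def memF (α : ℂ) (N : ℕ) : Prop :=
  (∃ S : Finset ℂ, S.card = N ∧ repSet α ↑S = Zadj α) ∧
  ∀ S : Finset ℂ, repSet α ↑S = Zadj α → N ≤ S.card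

theorem exists_mem_ne_zero_of_one_mem_repSet {α : ℂ} {F : Set ℂ} (h : 1 ∈ repSet α F) :
    ∃ s ∈ F, s ≠ 0 := by
  by_contra! hF
  obtain ⟨n, f, hf, hsum⟩ := h
  refine one_ne_zero (hsum.trans (Finset.sum_eq_zero fun j hj => ?_))
  rw [hF _ (hf j (Finset.mem_range_succ_iff.mp hj)), zero_mul]

theorem sum_range_succ_succ_mul_pow {R : Type*} [CommSemiring R] (f : ℕ → R) (α : R) (n : ℕ) :
    ∑ j ∈ Finset.range (n + 2), f j * α ^ j =
      f 0 + α * ∑ j ∈ Finset.range (n + 1), f (j + 1) * α ^ j := by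
  rw [Finset.sum_range_succ', Finset.mul_sum, pow_zero, mul_one, add_comm]
  exact congrArg (f 0 + ·) (Finset.sum_congr rfl fun j _ => by ring)

theorem notMem_repSet_of_one_sub_mul_eq {α z s : ℂ} {F : Set ℂ} (hα : α ≠ 0) (hs : s ≠ 0)
    (hzs : (1 - α) * z = s)
    (hdigit : ∀ (n : ℕ) (f : ℕ → ℂ), (∀ j ≤ n, f j ∈ F) →
      z = ∑ j ∈ Finset.range (n + 1), f j * α ^ j → f 0 = s) :
    z ∉ repSet α F := by
  rintro ⟨n, f, hf, hz⟩
  induction n generalizing f with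
  | zero =>
    have hzs' : z = s := by simpa [hdigit 0 f hf hz] using hz
    have hαs : α * s = 0 := by linear_combination -hzs + (1 - α) * hzs'
    exact hs ((mul_eq_zero.mp hαs).resolve_left hα)
  | succ n ih =>
    refine ih (fun j => f (j + 1)) (fun j hj => hf _ (by omega)) (mul_left_cancel₀ hα ?_)
    have hz' := hdigit _ f hf hz
    rw [sum_range_succ_succ_mul_pow, hz'] at hz
    linear_combination hz - hzs

theorem exists_one_sub_mul_aeval_eq_one {R A : Type*} [CommRing R] [CommRing A] [Algebra R A]
    {a : A} {p : R[X]} (hp : aeval a p = 0) (h : IsUnit (p.eval 1)) :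
    ∃ q : R[X], (1 - a) * aeval a q = 1 := by
  obtain ⟨q, hq⟩ := X_sub_C_dvd_sub_C_eval (a := 1) (p := p)
  refine ⟨C (↑h.unit⁻¹ : R) * q, ?_⟩
  have hqa := congrArg (aeval a) hq
  simp only [map_sub, map_mul, aeval_X, aeval_C, hp, map_one] at hqa
  have hinv : algebraMap R A ↑h.unit⁻¹ * algebraMap R A (p.eval 1) = 1 := by
    rw [← map_mul, h.val_inv_mul, map_one]
  rw [map_mul, aeval_C]
  linear_combination algebraMap R A ↑h.unit⁻¹ * hqa + hinv

theorem IsPrimMinPoly.aeval_eq_zero {α : ℂ} {M : ℤ[X]} (hM : IsPrimMinPoly α M) :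
    aeval α M = 0 := by
  obtain ⟨-, c, -, hMc⟩ := hM
  have h := congrArg (aeval α) hMc
  rwa [map_mul, minpoly.aeval, mul_zero, ← algebraMap_int_eq, aeval_map_algebraMap] at h

theorem IsPrimMinPoly.dvd_of_aeval_eq_zero_s5 {α : ℂ} {M P : ℤ[X]} (hM : IsPrimMinPoly α M)
    (hP : aeval α P = 0) : M ∣ P := by
  obtain ⟨hprim, c, hc, hMc⟩ := hM
  rw [IsPrimitive.Int.dvd_iff_map_cast_dvd_map_cast _ _ hprim, hMc, C_mul_dvd hc]
  exact minpoly.dvd ℚ α (by rwa [← algebraMap_int_eq, aeval_map_algebraMap])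

theorem IsPrimMinPoly.natAbs_eval_zero_dvd {α : ℂ} {M P : ℤ[X]} (hM : IsPrimMinPoly α M)
    (hP : aeval α P = 0) : ((M.eval 0).natAbs : ℤ) ∣ P.eval 0 :=
  Int.natAbs_dvd.mpr (eval_dvd (hM.dvd_of_aeval_eq_zero_s5 hP))

open Classical in
/-- The map `Φ`; it depends only on `z` once `m ∣ P(0)` for every `P` with `P(α) = 0`. -/
noncomputable def constCoeffMod (α : ℂ) (m : ℕ) (z : ℂ) : ZMod m :=
  if h : z ∈ Zadj α then ((h.choose.eval 0 : ℤ) : ZMod m) else 0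

section constCoeffMod

variable {α : ℂ} {m : ℕ} (hm : ∀ P : ℤ[X], aeval α P = 0 → (m : ℤ) ∣ P.eval 0)
include hm

theorem constCoeffMod_aeval (P : ℤ[X]) :
    constCoeffMod α m (aeval α P) = ((P.eval 0 : ℤ) : ZMod m) := by
  have h : aeval α P ∈ Zadj α := ⟨P, rfl⟩
  rw [constCoeffMod, dif_pos h, ZMod.intCast_eq_intCast_iff_dvd_sub, ← eval_sub]
  exact hm _ (by rw [map_sub, h.choose_spec, sub_self])

theorem constCoeffMod_intCast (a : ℤ) : constCoeffMod α m a = a := by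
  simpa using constCoeffMod_aeval hm (C a)

theorem constCoeffMod_one_sub_mul {z : ℂ} (hz : z ∈ Zadj α) :
    constCoeffMod α m ((1 - α) * z) = constCoeffMod α m z := by
  obtain ⟨P, rfl⟩ := hz
  have h : (1 - α) * aeval α P = aeval α ((1 - X) * P) := by simp
  rw [h, constCoeffMod_aeval hm, constCoeffMod_aeval hm]
  simp

theorem constCoeffMod_sum {F : Set ℂ} (hF : F ⊆ Zadj α) {n : ℕ} {f : ℕ → ℂ}
    (hf : ∀ j ≤ n, f j ∈ F) :
    constCoeffMod α m (∑ j ∈ Finset.range (n + 1), f j * α ^ j) = constCoeffMod α m (f 0) := by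
  choose! P hP using fun j (hj : j ≤ n) => hF (hf j hj)
  have hsum : ∑ j ∈ Finset.range (n + 1), f j * α ^ j
      = aeval α (∑ j ∈ Finset.range (n + 1), P j * X ^ j) := by
    simp only [map_sum, map_mul, map_pow, aeval_X]
    exact Finset.sum_congr rfl fun j hj => by rw [hP j (Finset.mem_range_succ_iff.mp hj)]
  rw [hsum, constCoeffMod_aeval hm, ← hP 0 n.zero_le, constCoeffMod_aeval hm, eval_finsetSum,
    Finset.sum_eq_single_of_mem 0 (by simp) fun j _ hj => by simp [hj]]
  simp

theorem injOn_constCoeffMod [NeZero m] {S : Finset ℂ} (hS : repSet α S = Zadj α)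
    (hcard : S.card = m) : Set.InjOn (constCoeffMod α m) S := by
  have hSZ : (S : Set ℂ) ⊆ Zadj α := hS ▸ subset_repSet α S
  refine Finset.injOn_of_surjOn_of_card_le (t := Finset.univ) _ (fun _ _ => Finset.mem_univ _)
    (fun r _ => ?_) (by simp [hcard])
  obtain ⟨a, rfl⟩ := ZMod.intCast_surjective r
  obtain ⟨n, f, hf, hsum⟩ : (a : ℂ) ∈ repSet α S := hS ▸ ⟨C a, by simp⟩
  refine ⟨f 0, hf 0 n.zero_le, ?_⟩
  rw [← constCoeffMod_sum hm hSZ hf, ← hsum, constCoeffMod_intCast hm]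

end constCoeffMod

theorem not_memF_of_abs_eval_one_eq_one_general (α : ℂ)
    (M : ℤ[X]) (hM : IsPrimMinPoly α M) (h1 : (M.eval 1).natAbs = 1) :
    ¬ memF α (M.eval 0).natAbs ∧
    ∀ S : Finset ℂ, S.card = (M.eval 0).natAbs → repSet α ↑S ≠ Zadj α := by
  suffices h : ∀ S : Finset ℂ, S.card = (M.eval 0).natAbs → repSet α ↑S ≠ Zadj α from
    ⟨fun ⟨⟨S, hcard, hS⟩, _⟩ => h S hcard hS, h⟩
  intro S hcard hS
  have hm := fun P => hM.natAbs_eval_zero_dvd (P := P)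
  have hSZ : (S : Set ℂ) ⊆ Zadj α := hS ▸ subset_repSet α S
  obtain ⟨s, hsS, hs0⟩ := exists_mem_ne_zero_of_one_mem_repSet (hS ▸ ⟨1, map_one _⟩ :
    (1 : ℂ) ∈ repSet α S)
  have hm0 : (M.eval 0).natAbs ≠ 0 := hcard ▸ Finset.card_ne_zero_of_mem hsS
  have : NeZero (M.eval 0).natAbs := ⟨hm0⟩
  have hα : α ≠ 0 := by
    rintro rfl
    refine hm0 (Int.natAbs_eq_zero.mpr ?_)
    simpa [aeval_def, eval₂_at_zero, coeff_zero_eq_eval_zero] using hM.aeval_eq_zero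
  obtain ⟨q, hq⟩ :=
    exists_one_sub_mul_aeval_eq_one hM.aeval_eq_zero (Int.isUnit_iff_natAbs_eq.mpr h1)
  obtain ⟨P, hP⟩ := hSZ hsS
  have hz : aeval α q * s ∈ Zadj α := ⟨q * P, by rw [map_mul, hP]⟩
  have hzs : (1 - α) * (aeval α q * s) = s := by rw [← mul_assoc, hq, one_mul]
  refine notMem_repSet_of_one_sub_mul_eq hα hs0 hzs (fun n f hf hrep => ?_) (hS ▸ hz)
  refine injOn_constCoeffMod hm hS hcard (hf 0 n.zero_le) hsS ?_
  rw [← constCoeffMod_sum hm hSZ hf, ← hrep, ← constCoeffMod_one_sub_mul hm hz, hzs]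

/-- Let `α` be an algebraic number with `|M_α(1)| = 1`.  Then `α ∉ 𝓕_{|M_α(0)|}`;
in particular no finite `S ⊆ ℂ` with `Card(S) = |M_α(0)|` satisfies `ℤ[α] = S[α]`. -/
theorem not_memF_of_abs_eval_one_eq_one (α : ℂ) (hα : IsAlgebraic ℚ α)
    (M : ℤ[X]) (hM : IsPrimMinPoly α M) (h1 : (M.eval 1).natAbs = 1) :
    ¬ memF α (M.eval 0).natAbs ∧
    ∀ S : Finset ℂ, S.card = (M.eval 0).natAbs → repSet α ↑S ≠ Zadj α :=
  not_memF_of_abs_eval_one_eq_one_general α M hM h1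
end

section
/- If α is an algebraic integer all of whose conjugates (the complex roots of its minimal polynomial, including α itself) have modulus greater than 2, then α ∈ 𝓕_{|M_α(0)|}; that is, there exists a finite set S ⊆ ℂ with Card(S) = |M_α(0)| and ℤ[α] = S[α], and this cardinality is minimal. -/
/-!
Since `α` is an algebraic integer, `ℤ[α] ≅ ℤ[X]/(M_α)`, hence `ℤ[α]/(α) ≅ ℤ/M_α(0)`. An expansion
`Σ s_j α^j` is congruent to its first digit `s_0` modulo `α`, so a digit set `S` with
`S[α] = ℤ[α]` meets every residue class and `|S| ≥ |M_α(0)|`.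

Conversely, take as digits a representative of least house in each residue class (for the class
of `0` this is `0`); a least one exists because there are finitely many algebraic integers of
bounded house in `ℚ(α)`. If `d` is the digit of the class of `x ∈ ℤ[α]`, then `x = d + α y` with
`y ∈ ℤ[α]` and `house y ≤ (house x + house d) house α⁻¹ ≤ 2 house α⁻¹ · house x`, where
`2 house α⁻¹ < 1` because all conjugates of `α` have modulus `> 2`. Iterating, the house drops
below `1`, and the only algebraic integer of house `< 1` is `0`, so the expansion terminates.
-/

open Polynomial

open NumberField

section DigitSums

variable {L : Type*} [CommSemiring L]

def digitSums (a : L) (F : Set L) : Set L :=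
  {z | ∃ (n : ℕ) (f : ℕ → L), (∀ j ≤ n, f j ∈ F) ∧
    z = ∑ j ∈ Finset.range (n + 1), f j * a ^ j}

theorem repSet_eq_digitSums (α : ℂ) (F : Set ℂ) : repSet α F = digitSums α F := rfl

theorem Zadj_eq_adjoin (α : ℂ) : Zadj α = Algebra.adjoin ℤ {α} := by
  ext z
  simp [Zadj, Algebra.adjoin_singleton_eq_range_aeval]

variable {a d y z : L} {F : Set L}

theorem mem_digitSums_of_mem (hd : d ∈ F) : d ∈ digitSums a F :=
  ⟨0, fun _ => d, fun _ _ => hd, by simp⟩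

theorem add_mul_mem_digitSums (hd : d ∈ F) (hy : y ∈ digitSums a F) :
    d + a * y ∈ digitSums a F := by
  obtain ⟨n, f, hf, rfl⟩ := hy
  refine ⟨n + 1, fun j => j.casesOn d f, fun j hj => ?_, ?_⟩
  · cases j with
    | zero => exact hd
    | succ j => exact hf j (by omega)
  · rw [Finset.sum_range_succ' _ (n + 1), Finset.mul_sum, add_comm, pow_zero, mul_one]
    exact congrArg (· + d) (Finset.sum_congr rfl fun j _ => by rw [pow_succ]; ring)

theorem digitSums_subset {S : Type*} [SetLike S L] [SubsemiringClass S L] {D : S}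
    (ha : a ∈ D) (hF : F ⊆ D) : digitSums a F ⊆ D := by
  rintro _ ⟨n, f, hf, rfl⟩
  exact sum_mem fun j hj =>
    mul_mem (hF (hf j (Nat.lt_succ_iff.mp (Finset.mem_range.mp hj)))) (pow_mem ha j)

theorem exists_add_mul_of_mem_digitSums {S : Type*} [SetLike S L] [SubsemiringClass S L]
    {D : S} (ha : a ∈ D) (hF : F ⊆ D) (hz : z ∈ digitSums a F) :
    ∃ d ∈ F, ∃ y ∈ D, z = d + a * y := by
  obtain ⟨n, f, hf, rfl⟩ := hz
  refine ⟨f 0, hf 0 n.zero_le, ∑ j ∈ Finset.range n, f (j + 1) * a ^ j,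
    sum_mem fun j hj => mul_mem (hF (hf _ (Finset.mem_range.mp hj))) (pow_mem ha j), ?_⟩
  rw [Finset.sum_range_succ', Finset.mul_sum, add_comm, pow_zero, mul_one]
  exact congrArg (f 0 + ·) (Finset.sum_congr rfl fun j _ => by rw [pow_succ]; ring)

theorem map_mem_digitSums {L' G : Type*} [CommSemiring L'] [FunLike G L L'] [RingHomClass G L L']
    (φ : G) (hz : z ∈ digitSums a F) : φ z ∈ digitSums (φ a) (φ '' F) := by
  obtain ⟨n, f, hf, rfl⟩ := hz
  exact ⟨n, φ ∘ f, fun j hj => Set.mem_image_of_mem φ (hf j hj), by simp [map_sum]⟩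

theorem digitSums_image_eq_adjoin {R L' : Type*} [CommSemiring R] [Algebra R L] [CommSemiring L']
    [Algebra R L'] (φ : L →ₐ[R] L') (h : digitSums a F = Algebra.adjoin R {a}) :
    digitSums (φ a) (φ '' F) = Algebra.adjoin R {φ a} := by
  have hadj : (Algebra.adjoin R {φ a} : Set L') = φ '' Algebra.adjoin R {a} := by
    rw [← AlgHom.map_adjoin_singleton, Subalgebra.coe_map]
  refine subset_antisymm (digitSums_subset (Algebra.self_mem_adjoin_singleton R _) ?_) ?_
  · rw [hadj, ← h]
    exact Set.image_mono fun d hd => mem_digitSums_of_mem hd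
  · rw [hadj, ← h]
    rintro _ ⟨x, hx, rfl⟩
    exact map_mem_digitSums φ hx

end DigitSums

section Residue

theorem eval₂_intCastRingHom_natAbs_eval_zero (p : ℤ[X]) :
    p.eval₂ (Int.castRingHom (ZMod (p.eval 0).natAbs)) 0 = 0 := by
  rw [eval₂_at_zero, coeff_zero_eq_eval_zero, eq_intCast, ZMod.intCast_zmod_eq_zero_iff_dvd,
    Int.natCast_natAbs, abs_dvd]

variable {L : Type*} [CommRing L]

theorem aeval_eq_coeff_zero_add_mul (α : L) (P : ℤ[X]) :
    aeval α P = P.coeff 0 + α * aeval α P.divX := by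
  conv_lhs => rw [← X_mul_divX_add P]
  rw [map_add, map_mul, aeval_X, aeval_C, algebraMap_int_eq, eq_intCast]
  ring

variable [IsDomain L] [CharZero L] {α : L}

noncomputable def residue (hα : IsIntegral ℤ α) :
    Algebra.adjoin ℤ {α} →+* ZMod ((minpoly ℤ α).eval 0).natAbs :=
  (AdjoinRoot.lift _ 0 (eval₂_intCastRingHom_natAbs_eval_zero _)).comp
    (minpoly.equivAdjoin hα).symm.toRingEquiv.toRingHom

theorem residue_eq_coeff_zero (hα : IsIntegral ℤ α) {x : Algebra.adjoin ℤ {α}} {P : ℤ[X]}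
    (hx : (x : L) = aeval α P) : residue hα x = P.coeff 0 := by
  have : x = minpoly.equivAdjoin hα (AdjoinRoot.mk _ P) := by
    ext
    rw [hx, minpoly.coe_equivAdjoin, AdjoinRoot.Minpoly.toAdjoin, AdjoinRoot.liftAlgHom_mk]
    exact (aeval_subalgebra_coe P _ ⟨α, Algebra.self_mem_adjoin_singleton ℤ α⟩).symm
  show AdjoinRoot.lift _ _ (eval₂_intCastRingHom_natAbs_eval_zero _)
    ((minpoly.equivAdjoin hα).symm _) = _
  rw [this, AlgEquiv.symm_apply_apply, AdjoinRoot.lift_mk, eval₂_at_zero, eq_intCast]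

theorem residue_gen (hα : IsIntegral ℤ α) :
    residue hα ⟨α, Algebra.self_mem_adjoin_singleton ℤ α⟩ = 0 := by
  rw [residue_eq_coeff_zero hα (aeval_X α).symm, coeff_X_zero, Int.cast_zero]

theorem ker_residue (hα : IsIntegral ℤ α) :
    RingHom.ker (residue hα) = Ideal.span {⟨α, Algebra.self_mem_adjoin_singleton ℤ α⟩} := by
  refine le_antisymm (fun x hx => ?_) ?_
  · obtain ⟨P, hP⟩ : ∃ P : ℤ[X], aeval α P = x := by
      simpa [Algebra.adjoin_singleton_eq_range_aeval] using x.2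
    rw [RingHom.mem_ker, residue_eq_coeff_zero hα hP.symm, ZMod.intCast_zmod_eq_zero_iff_dvd,
      Int.natCast_natAbs, abs_dvd, ← coeff_zero_eq_eval_zero] at hx
    obtain ⟨k, hk⟩ := hx
    set M := minpoly ℤ α
    refine Ideal.mem_span_singleton'.2
      ⟨⟨aeval α (P.divX - C k * M.divX), aeval_mem_adjoin_singleton ℤ α⟩, Subtype.ext ?_⟩
    have hM := aeval_eq_coeff_zero_add_mul α M
    rw [minpoly.aeval] at hM
    simp only [Subalgebra.coe_mul, map_sub, map_mul, eq_intCast, map_intCast]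
    have hk' : (P.coeff 0 : L) = M.coeff 0 * k := by exact_mod_cast hk
    linear_combination hP - aeval_eq_coeff_zero_add_mul α P - hk' + (k : L) * hM
  · rw [Ideal.span_le, Set.singleton_subset_iff, SetLike.mem_coe, RingHom.mem_ker,
      residue_gen]

theorem residue_surjective (hα : IsIntegral ℤ α) : Function.Surjective (residue hα) := by
  intro c
  obtain ⟨m, rfl⟩ := ZMod.intCast_surjective c
  exact ⟨m, map_intCast _ m⟩

theorem natAbs_le_card_of_digitSums_eq (hα : IsIntegral ℤ α) {S : Finset L}
    (hS : digitSums α S = Algebra.adjoin ℤ {α}) : ((minpoly ℤ α).eval 0).natAbs ≤ S.card := by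
  have hSD : (S : Set L) ⊆ Algebra.adjoin ℤ {α} := hS ▸ fun d hd => mem_digitSums_of_mem hd
  have hsurj : Function.Surjective fun d : S => residue hα ⟨d, hSD d.2⟩ := by
    intro c
    obtain ⟨m, rfl⟩ := ZMod.intCast_surjective c
    have hm : (m : L) ∈ digitSums α S := hS ▸ intCast_mem _ m
    obtain ⟨d, hd, y, hy, hmdy⟩ :=
      exists_add_mul_of_mem_digitSums (Algebra.self_mem_adjoin_singleton ℤ α) hSD hm
    have : (m : Algebra.adjoin ℤ {α}) =
        ⟨d, hSD hd⟩ + ⟨α, Algebra.self_mem_adjoin_singleton ℤ α⟩ * ⟨y, hy⟩ :=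
      Subtype.ext (by simpa using hmdy)
    refine ⟨⟨d, hd⟩, ?_⟩
    rw [← map_intCast (residue hα), this, map_add, map_mul, residue_gen, zero_mul, add_zero]
  have := Nat.card_le_card_of_surjective _ hsurj
  rwa [Nat.card_zmod, Nat.card_eq_fintype_card, Fintype.card_coe] at this

end Residue

theorem minpoly_int_eval_zero_ne_zero {L : Type*} [Field L] [CharZero L] {α : L}
    (hα : IsIntegral ℤ α) (h0 : α ≠ 0) : (minpoly ℤ α).eval 0 ≠ 0 := by
  have := minpoly.coeff_zero_ne_zero (hα.tower_top (A := ℚ)) h0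
  rwa [minpoly.isIntegrallyClosed_eq_field_fractions' ℚ hα, coeff_map, coeff_zero_eq_eval_zero,
    ne_eq, map_eq_zero_iff _ (algebraMap ℤ ℚ).injective_int] at this

section House

variable {K : Type*} [Field K] [NumberField K]

theorem ne_zero_of_lt_norm_embedding {a : K} {r : ℝ} (hr : 0 ≤ r)
    (h : ∀ σ : K →+* ℂ, r < ‖σ a‖) : a ≠ 0 := by
  rintro rfl
  simpa using (h (Classical.arbitrary _)).trans_le' hr

theorem house_sub_le (x y : K) : house (x - y) ≤ house x + house y := by
  simp only [house, map_sub]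
  exact norm_sub_le _ _

theorem house_lt_iff {x : K} {B : ℝ} (hB : 0 < B) :
    house x < B ↔ ∀ σ : K →+* ℂ, ‖σ x‖ < B := by
  simp only [house, pi_norm_lt_iff hB, canonicalEmbedding.apply_at]

theorem house_inv_lt_half {a : K} (h2 : ∀ σ : K →+* ℂ, 2 < ‖σ a‖) : house a⁻¹ < 1 / 2 := by
  refine (house_lt_iff one_half_pos).2 fun σ => ?_
  rw [map_inv₀, norm_inv, one_div]
  exact inv_strictAnti₀ two_pos (h2 σ)

theorem house_le_of_eq_add_mul {a x d y : K} (ha : a ≠ 0) (h : x = d + a * y) :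
    house y ≤ (house x + house d) * house a⁻¹ := by
  have hy : y = (x - d) * a⁻¹ := by rw [h]; field_simp; ring
  rw [hy]
  exact (house_mul_le _ _).trans
    (mul_le_mul_of_nonneg_right (house_sub_le x d) (house_nonneg _))

theorem northcott_house_adjoin {a : K} (ha : IsIntegral ℤ a) :
    Northcott fun x : Algebra.adjoin ℤ {a} => house (x : K) where
  finite_le B := by
    refine ((Embeddings.finite_of_norm_le K ℂ B).preimage Subtype.val_injective.injOn).subset
      fun x hx => ⟨adjoin_le_integralClosure ha x.2, fun σ => ?_⟩
    exact (norm_embedding_le_house (x : K) σ).trans hx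

end House

section Digits

variable {K : Type*} [Field K] [NumberField K] {a : K} (ha : IsIntegral ℤ a)

theorem exists_min_house_of_residue_eq (c : ZMod ((minpoly ℤ a).eval 0).natAbs) :
    ∃ d : Algebra.adjoin ℤ {a}, residue ha d = c ∧
      ∀ x, residue ha x = c → house (d : K) ≤ house (x : K) :=
  have := northcott_house_adjoin ha
  Northcott.exists_min_image _ (residue ha ⁻¹' {c}) (residue_surjective ha c)

noncomputable def minHouseDigit (c : ZMod ((minpoly ℤ a).eval 0).natAbs) :
    Algebra.adjoin ℤ {a} :=
  (exists_min_house_of_residue_eq ha c).choose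

theorem residue_minHouseDigit (c : ZMod ((minpoly ℤ a).eval 0).natAbs) :
    residue ha (minHouseDigit ha c) = c :=
  (exists_min_house_of_residue_eq ha c).choose_spec.1

theorem house_minHouseDigit_le (x : Algebra.adjoin ℤ {a}) :
    house (minHouseDigit ha (residue ha x) : K) ≤ house (x : K) :=
  (exists_min_house_of_residue_eq ha _).choose_spec.2 x rfl

theorem minHouseDigit_zero : minHouseDigit ha 0 = 0 := by
  simpa [house] using house_minHouseDigit_le ha 0

theorem exists_eq_minHouseDigit_add_mul (x : Algebra.adjoin ℤ {a}) :
    ∃ y : Algebra.adjoin ℤ {a}, (x : K) = minHouseDigit ha (residue ha x) + a * y := by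
  have hres : residue ha (x - minHouseDigit ha (residue ha x)) = 0 := by
    rw [map_sub, residue_minHouseDigit, sub_self]
  obtain ⟨y, hy⟩ := Ideal.mem_span_singleton'.1 ((ker_residue ha).le hres)
  refine ⟨y, ?_⟩
  have := congrArg Subtype.val hy
  push_cast at this
  linear_combination -this

theorem mem_digitSums_minHouseDigit (h2 : ∀ σ : K →+* ℂ, 2 < ‖σ a‖)
    (x : Algebra.adjoin ℤ {a}) :
    (x : K) ∈ digitSums a (Set.range fun c => (minHouseDigit ha c : K)) := by
  set c := 2 * house a⁻¹
  have hc0 : 0 ≤ c := mul_nonneg zero_le_two (house_nonneg _)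
  have hc : c < 1 := by linarith [house_inv_lt_half h2]
  suffices key : ∀ n : ℕ, ∀ x : Algebra.adjoin ℤ {a}, c ^ n * house (x : K) < 1 →
      (x : K) ∈ digitSums a (Set.range fun c => (minHouseDigit ha c : K)) by
    obtain ⟨n, hn⟩ := (((tendsto_pow_atTop_nhds_zero_of_lt_one hc0 hc).mul_const
      (house (x : K))).eventually (gt_mem_nhds (show 0 * house (x : K) < 1 by simp))).exists
    exact key n x hn
  intro n
  induction n with
  | zero =>
    intro x hx
    obtain rfl : x = 0 := by
      by_contra h
      have := one_le_house_of_isIntegral (adjoin_le_integralClosure ha x.2) (by exact_mod_cast h)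
      linarith
    rw [← minHouseDigit_zero ha]
    exact mem_digitSums_of_mem ⟨0, rfl⟩
  | succ n ih =>
    intro x hx
    obtain ⟨y, hxy⟩ := exists_eq_minHouseDigit_add_mul ha x
    rw [hxy]
    refine add_mul_mem_digitSums ⟨_, rfl⟩ (ih y ?_)
    have hy := house_le_of_eq_add_mul (ne_zero_of_lt_norm_embedding zero_le_two h2) hxy
    have hd := house_minHouseDigit_le ha x
    calc c ^ n * house (y : K) ≤ c ^ n * (c * house (x : K)) :=
          mul_le_mul_of_nonneg_left (by nlinarith [house_nonneg a⁻¹]) (pow_nonneg hc0 n)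
      _ = c ^ (n + 1) * house (x : K) := by ring
      _ < 1 := hx

end Digits

theorem exists_finset_digitSums_eq_adjoin {K : Type*} [Field K] [NumberField K] {a : K}
    (ha : IsIntegral ℤ a) (h2 : ∀ σ : K →+* ℂ, 2 < ‖σ a‖) :
    ∃ T : Finset K, T.card = ((minpoly ℤ a).eval 0).natAbs ∧
      digitSums a T = Algebra.adjoin ℤ {a} := by
  classical
  have : NeZero ((minpoly ℤ a).eval 0).natAbs := ⟨Int.natAbs_ne_zero.2
    (minpoly_int_eval_zero_ne_zero ha (ne_zero_of_lt_norm_embedding zero_le_two h2))⟩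
  refine ⟨Finset.univ.image fun c => (minHouseDigit ha c : K), ?_, ?_⟩
  · have hinj : Function.Injective fun c => (minHouseDigit ha c : K) :=
      Subtype.val_injective.comp (Function.LeftInverse.injective (residue_minHouseDigit ha))
    rw [Finset.card_image_of_injective _ hinj, Finset.card_univ, ZMod.card]
  · rw [Finset.coe_image, Finset.coe_univ, Set.image_univ]
    refine subset_antisymm (digitSums_subset (Algebra.self_mem_adjoin_singleton ℤ a) ?_)
      fun x hx => mem_digitSums_minHouseDigit ha h2 ⟨x, hx⟩
    rintro _ ⟨c, rfl⟩
    exact (minHouseDigit ha c).2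

open IntermediateField in
theorem exists_finset_repSet_eq_Zadj {α : ℂ} (hα : IsIntegral ℤ α)
    (hconj : ∀ z : ℂ, aeval z (minpoly ℤ α) = 0 → 2 < ‖z‖) :
    ∃ S : Finset ℂ, S.card = ((minpoly ℤ α).eval 0).natAbs ∧ repSet α S = Zadj α := by
  classical
  have : NumberField ℚ⟮α⟯ :=
    { to_finiteDimensional := adjoin.finiteDimensional (hα.tower_top (A := ℚ)) }
  let ι : ℚ⟮α⟯ →ₐ[ℤ] ℂ := IsScalarTower.toAlgHom ℤ ℚ⟮α⟯ ℂ
  have hι : Function.Injective ι := (algebraMap ℚ⟮α⟯ ℂ).injective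
  set a := AdjoinSimple.gen ℚ α
  have hιa : ι a = α := AdjoinSimple.algebraMap_gen ℚ α
  have hM : minpoly ℤ a = minpoly ℤ α := by
    have := minpoly.algHom_eq ι hι a
    rwa [hιa, eq_comm] at this
  have ha : IsIntegral ℤ a := (isIntegral_algHom_iff ι hι).1 (by rwa [hιa])
  have h2 : ∀ σ : ℚ⟮α⟯ →+* ℂ, 2 < ‖σ a‖ := fun σ => hconj _ <| by
    rw [← hM]
    exact (aeval_algHom_apply σ.toIntAlgHom a _).trans (by rw [minpoly.aeval, map_zero])
  obtain ⟨T, hcard, hT⟩ := exists_finset_digitSums_eq_adjoin ha h2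
  refine ⟨T.image ι, by rw [Finset.card_image_of_injective _ hι, hcard, hM], ?_⟩
  rw [repSet_eq_digitSums, Zadj_eq_adjoin, Finset.coe_image]
  have := digitSums_image_eq_adjoin ι hT
  rwa [hιa] at this

/-- If `α` is an algebraic integer all of whose conjugates have modulus greater than `2`,
then `α ∈ 𝓕_{|M_α(0)|}` (for an algebraic integer, `M_α` is the monic minimal polynomial
over `ℤ`). -/
theorem memF_of_conjugates_gt_two (α : ℂ) (hint : IsIntegral ℤ α)
    (hconj : ∀ z : ℂ, aeval z (minpoly ℤ α) = 0 → 2 < ‖z‖) :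
    memF α (((minpoly ℤ α).eval 0).natAbs) :=
  ⟨exists_finset_repSet_eq_Zadj hint hconj, fun S hS =>
    natAbs_le_card_of_digitSums_eq hint (by rw [← repSet_eq_digitSums, hS, Zadj_eq_adjoin])⟩
end

section
/- Let α = a/b where a ∈ ℕ, b ∈ ℤ, a > |b| ≥ 1, gcd(a, b) = 1 and a ≠ b + 1. Then α ∈ 𝓕_a (note |M_α(0)| = a since M_α(x) = bx − a), and moreover one can choose a set S ⊆ ℤ with 0 ∈ S, Card(S) = a, and ℤ[α] = S[α]. -/
open Polynomial

/-!
Write `α = A / b`. Clearing denominators, `P(α) = P̃(A) / b ^ deg P` with `P̃ = P.scaleRoots b`,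
so `P(α) = 0` forces `A ∣ P(0)`: the residue `P(0) mod A` is well defined on `ℤ[α]`. If
`S[α] = ℤ[α]`, then `S ⊆ ℤ[α]` and every element of `ℤ[α]` is `s + α w` with `s ∈ S`, `w ∈ ℤ[α]`,
so the residues of the elements of `S` cover `ℤ/A` and `|S| ≥ A`.

Conversely, the digits `b s - A k(s)`, `0 ≤ s < A`, form a complete residue system mod `A` for
any correction `k`. Hence `z / b ^ n = d + α (m / b ^ (n - 1))` with a digit `d`, and at `n = 0`
every integer is `d + α (m b)`. The multiples `m b` are expanded by
`m b = d + α (U(m) b)` with `U(m) = b ⌊m / A⌋ + k(m mod A)`, and `k` is chosen so that iterating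
`U` reaches `0`: `k(s) = ⌊b s / A⌋` (so `U(m) = ⌊b m / A⌋`) for `b < 0`, and
`k(s) = max (s - 1) 0` for `b > 0`. In the latter case negative `m` must increase, and this is
where `A ≥ b + 2` enters: `U(-1) = A - b - 2`.
-/

section RepSet

variable {α : ℂ} {F : Set ℂ}

theorem sum_mul_pow_mem_Zadj {s : Finset ℕ} {f : ℕ → ℂ} (hf : ∀ j ∈ s, f j ∈ Zadj α) :
    ∑ j ∈ s, f j * α ^ j ∈ Zadj α := by
  have hZ : Zadj α = ((aeval α : ℤ[X] →ₐ[ℤ] ℂ).range : Set ℂ) := (AlgHom.coe_range _).symm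
  rw [hZ] at hf ⊢
  have hα : α ∈ (aeval α : ℤ[X] →ₐ[ℤ] ℂ).range := ⟨X, aeval_X α⟩
  exact Subalgebra.sum_mem _ fun j hj => Subalgebra.mul_mem _ (hf j hj) (Subalgebra.pow_mem _ hα j)

theorem repSet_subset_Zadj (hF : F ⊆ Zadj α) : repSet α F ⊆ Zadj α := by
  rintro _ ⟨n, f, hf, rfl⟩
  exact sum_mul_pow_mem_Zadj fun j hj => hF (hf j (Finset.mem_range_succ_iff.mp hj))

theorem mem_repSet_of_mem {s : ℂ} (hs : s ∈ F) : s ∈ repSet α F :=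
  ⟨0, fun _ => s, fun _ _ => hs, by simp⟩

theorem add_mul_mem_repSet {d y : ℂ} (hd : d ∈ F) (hy : y ∈ repSet α F) :
    d + α * y ∈ repSet α F := by
  obtain ⟨n, f, hf, rfl⟩ := hy
  refine ⟨n + 1, fun j => if j = 0 then d else f (j - 1), fun j hj => ?_, ?_⟩
  · rcases j with _ | j
    · simpa using hd
    · simpa using hf j (by omega)
  · rw [Finset.sum_range_succ' _ (n + 1), Finset.mul_sum]
    simp only [Nat.add_sub_cancel, Nat.succ_ne_zero, if_false, if_true, pow_zero, mul_one]
    rw [add_comm]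
    exact congrArg (· + d) (Finset.sum_congr rfl fun j _ => by ring)

theorem exists_add_mul_of_mem_repSet (hF : F ⊆ Zadj α) {z : ℂ} (hz : z ∈ repSet α F) :
    ∃ d ∈ F, ∃ w ∈ Zadj α, z = d + α * w := by
  obtain ⟨n, f, hf, rfl⟩ := hz
  refine ⟨f 0, hf 0 n.zero_le, ∑ j ∈ Finset.range n, f (j + 1) * α ^ j,
    sum_mul_pow_mem_Zadj fun j hj => hF (hf (j + 1) (by simp at hj; omega)), ?_⟩
  rw [Finset.sum_range_succ', Finset.mul_sum, add_comm]
  simp only [pow_zero, mul_one]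
  exact congrArg (f 0 + ·) (Finset.sum_congr rfl fun j _ => by ring)

end RepSet

section RationalPoint

variable {A b : ℤ}

theorem aeval_div_eq (hb : b ≠ 0) (P : ℤ[X]) :
    aeval ((A : ℂ) / b) P = (((P.scaleRoots b).eval A : ℤ) : ℂ) / (b : ℂ) ^ P.natDegree := by
  have hb' : (b : ℂ) ≠ 0 := Int.cast_ne_zero.mpr hb
  have h := scaleRoots_eval₂_mul (Int.castRingHom ℂ) ((A : ℂ) / b) b (p := P)
  rw [eq_intCast, mul_div_cancel₀ _ hb', ← eq_intCast (Int.castRingHom ℂ) A, eval₂_hom] at h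
  simp only [eq_intCast] at h
  rw [aeval_def, algebraMap_int_eq, eq_div_iff (pow_ne_zero _ hb'), h, mul_comm]

theorem dvd_coeff_zero_of_aeval_div_eq_zero (hb : b ≠ 0) (hAb : IsCoprime A b) {P : ℤ[X]}
    (hP : aeval ((A : ℂ) / b) P = 0) : A ∣ P.coeff 0 := by
  have hroot : (P.scaleRoots b).IsRoot A := by
    rw [aeval_div_eq hb, div_eq_zero_iff] at hP
    exact_mod_cast hP.resolve_right (pow_ne_zero _ (Int.cast_ne_zero.mpr hb))
  have hdvd := hroot.dvd_coeff_zero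
  rw [coeff_scaleRoots, Nat.sub_zero] at hdvd
  exact hAb.pow_right.dvd_of_dvd_mul_right hdvd

theorem coeff_zero_modEq_of_aeval_div_eq (hb : b ≠ 0) (hAb : IsCoprime A b) {P Q : ℤ[X]}
    (h : aeval ((A : ℂ) / b) P = aeval ((A : ℂ) / b) Q) : P.coeff 0 ≡ Q.coeff 0 [ZMOD A] := by
  refine (Int.modEq_iff_dvd.mpr ?_).symm
  simpa using dvd_coeff_zero_of_aeval_div_eq_zero hb hAb (P := P - Q) (by simp [h])

end RationalPoint

theorem le_card_of_repSet_eq_Zadj {a : ℕ} {b : ℤ} (hb : b ≠ 0) (hab : IsCoprime (a : ℤ) b)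
    (S : Finset ℂ) (hS : repSet ((a : ℂ) / b) S = Zadj ((a : ℂ) / b)) : a ≤ S.card := by
  have hSZ : (S : Set ℂ) ⊆ Zadj ((a : ℂ) / b) := hS ▸ fun s hs => mem_repSet_of_mem hs
  choose! P hP using fun s (hs : s ∈ S) => (hSZ hs : ∃ P : ℤ[X], aeval _ P = s)
  have hsurj : Set.SurjOn (fun s => ((P s).coeff 0 % (a : ℤ)).toNat) S (Finset.range a) := by
    intro t htr
    have ht : ((t : ℤ) : ℂ) ∈ repSet ((a : ℂ) / b) S := hS ▸ ⟨C (t : ℤ), by simp⟩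
    obtain ⟨d, hd, _, ⟨R, rfl⟩, hdR⟩ := exists_add_mul_of_mem_repSet hSZ ht
    have heval :
        aeval (((a : ℤ) : ℂ) / b) (C (t : ℤ)) = aeval (((a : ℤ) : ℂ) / b) (P d + X * R) := by
      rw [Int.cast_natCast] at hdR
      simp [hP d hd, hdR]
    have hmod := coeff_zero_modEq_of_aeval_div_eq hb hab heval
    simp only [coeff_C_zero, coeff_add, coeff_X_mul_zero, add_zero] at hmod
    refine ⟨d, hd, ?_⟩
    simp only [Finset.coe_range, Set.mem_Iio] at htr
    rw [Int.ModEq, Int.emod_eq_of_lt (by positivity) (by omega)] at hmod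
    simp only [← hmod, Int.toNat_natCast]
  simpa using Finset.card_le_card_of_surjOn _ hsurj

section Digits

variable {A b : ℤ} {k : ℤ → ℤ}

noncomputable def digitSet (A b : ℤ) (k : ℤ → ℤ) : Finset ℤ :=
  (Finset.Ico 0 A).image fun s => b * s - A * k s

def digitSucc (A b : ℤ) (k : ℤ → ℤ) (m : ℤ) : ℤ := b * (m / A) + k (m % A)

theorem card_digitSet (hAb : IsCoprime A b) : (digitSet A b k).card = A.toNat := by
  rw [digitSet, Finset.card_image_of_injOn, Int.card_Ico, sub_zero]
  intro s hs t ht hst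
  simp only [Finset.coe_Ico, Set.mem_Ico] at hs ht
  have hdvd : A ∣ s - t :=
    hAb.dvd_of_dvd_mul_left ⟨k s - k t, by linear_combination hst⟩
  have := Int.eq_zero_of_dvd_of_natAbs_lt_natAbs hdvd (by omega)
  omega

theorem zero_mem_digitSet (hA : 0 < A) (hk : k 0 = 0) : 0 ∈ digitSet A b k :=
  Finset.mem_image.mpr ⟨0, Finset.mem_Ico.mpr ⟨le_rfl, hA⟩, by simp [hk]⟩

theorem exists_mem_digitSet_dvd_sub_mul (hA : 0 < A) (hAb : IsCoprime A b) {c : ℤ}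
    (hAc : IsCoprime A c) (z : ℤ) : ∃ d ∈ digitSet A b k, A ∣ z - d * c := by
  obtain ⟨u, v, huv⟩ := hAb.mul_right hAc
  refine ⟨b * (z * v % A) - A * k (z * v % A), Finset.mem_image.mpr ⟨z * v % A,
    Finset.mem_Ico.mpr ⟨Int.emod_nonneg _ hA.ne', Int.emod_lt_of_pos _ hA⟩, rfl⟩, ?_⟩
  refine ⟨z * u + b * c * (z * v / A) + k (z * v % A) * c, ?_⟩
  linear_combination z * huv.symm - b * c * Int.mul_ediv_add_emod (z * v) A

theorem mul_sub_mul_digitSucc_mem (hA : 0 < A) (m : ℤ) :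
    b * m - A * digitSucc A b k m ∈ digitSet A b k := by
  refine Finset.mem_image.mpr ⟨m % A,
    Finset.mem_Ico.mpr ⟨Int.emod_nonneg _ hA.ne', Int.emod_lt_of_pos _ hA⟩, ?_⟩
  rw [digitSucc]
  linear_combination b * Int.mul_ediv_add_emod m A

end Digits

section Expansion

variable {A b : ℤ} {k : ℤ → ℤ}

local notation "R" => repSet ((A : ℂ) / b) (Int.cast '' (digitSet A b k : Set ℤ))

theorem mul_mem_repSet_of_descent (hA : 0 < A) (hb : b ≠ 0) (hk : k 0 = 0) {μ : ℤ → ℕ}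
    (hμ : ∀ m ≠ 0, μ (digitSucc A b k m) < μ m) (m : ℤ) : (m : ℂ) * b ∈ R := by
  induction hn : μ m using Nat.strong_induction_on generalizing m with
  | _ n ih =>
    obtain rfl | hm := eq_or_ne m 0
    · have h0 : (0 : ℂ) ∈ Int.cast '' (digitSet A b k : Set ℤ) :=
        ⟨0, zero_mem_digitSet hA hk, Int.cast_zero⟩
      simpa using mem_repSet_of_mem (α := (A : ℂ) / b) h0
    have hb' : (b : ℂ) ≠ 0 := Int.cast_ne_zero.mpr hb
    have hstep : (m : ℂ) * b =
        ((b * m - A * digitSucc A b k m : ℤ) : ℂ) + A / b * (digitSucc A b k m * b) := by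
      push_cast
      field_simp
      ring
    rw [hstep]
    exact add_mul_mem_repSet ⟨_, mul_sub_mul_digitSucc_mem hA m, rfl⟩
      (ih _ (hn ▸ hμ m hm) _ rfl)

theorem intCast_div_pow_mem_repSet_of_forall_mul (hA : 0 < A) (hb : b ≠ 0) (hAb : IsCoprime A b)
    {n : ℕ} (h : ∀ m : ℤ, (m : ℂ) * b / b ^ n ∈ R) (z : ℤ) : (z : ℂ) / b ^ n ∈ R := by
  obtain ⟨d, hd, m, hm⟩ := exists_mem_digitSet_dvd_sub_mul (k := k) hA hAb hAb.pow_right z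
  have hb' : (b : ℂ) ≠ 0 := Int.cast_ne_zero.mpr hb
  have hstep : (z : ℂ) / b ^ n = d + A / b * (m * b / b ^ n) := by
    have hm' : (z : ℂ) = d * b ^ n + A * m := by
      rw [sub_eq_iff_eq_add'] at hm
      exact_mod_cast hm
    field_simp
    rw [hm']
    ring
  rw [hstep]
  exact add_mul_mem_repSet ⟨d, hd, rfl⟩ (h m)

theorem intCast_div_pow_mem_repSet (hA : 0 < A) (hb : b ≠ 0) (hAb : IsCoprime A b)
    (hmul : ∀ m : ℤ, (m : ℂ) * b ∈ R) (n : ℕ) (z : ℤ) : (z : ℂ) / b ^ n ∈ R := by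
  induction n generalizing z with
  | zero => exact intCast_div_pow_mem_repSet_of_forall_mul hA hb hAb (by simpa using hmul) z
  | succ n ih =>
    refine intCast_div_pow_mem_repSet_of_forall_mul hA hb hAb (fun m => ?_) z
    rw [pow_succ, mul_div_mul_right _ _ (Int.cast_ne_zero.mpr hb)]
    exact ih m

theorem repSet_digitSet_eq_Zadj (hA : 0 < A) (hb : b ≠ 0) (hAb : IsCoprime A b) (hk : k 0 = 0)
    {μ : ℤ → ℕ} (hμ : ∀ m ≠ 0, μ (digitSucc A b k m) < μ m) : R = Zadj ((A : ℂ) / b) := by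
  refine (repSet_subset_Zadj ?_).antisymm ?_
  · rintro _ ⟨d, -, rfl⟩
    exact ⟨C d, by simp⟩
  · rintro _ ⟨P, rfl⟩
    rw [aeval_div_eq hb]
    exact intCast_div_pow_mem_repSet hA hb hAb (mul_mem_repSet_of_descent hA hb hk hμ) _ _

end Expansion

section Descent

variable {A b : ℤ}

theorem digitSucc_ediv (hA : 0 < A) (m : ℤ) :
    digitSucc A b (fun s => b * s / A) m = b * m / A := by
  rw [digitSucc, add_comm, ← Int.add_mul_ediv_left _ _ hA.ne']
  congr 1
  linear_combination b * Int.mul_ediv_add_emod m A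

theorem exists_descent_of_neg (hb : b < 0) (hbA : -b < A) :
    ∃ μ : ℤ → ℕ, ∀ m ≠ 0, μ (digitSucc A b (fun s => b * s / A) m) < μ m := by
  have hA : 0 < A := by omega
  refine ⟨fun m => 2 * m.natAbs + if 0 < m then 1 else 0, fun m hm => ?_⟩
  dsimp only
  rw [digitSucc_ediv hA]
  rcases hm.lt_or_gt with hm | hm
  · have h0 : 0 ≤ b * m / A := Int.ediv_nonneg (by nlinarith) hA.le
    have h1 : b * m / A < -m := (Int.ediv_lt_iff_lt_mul hA).mpr (by nlinarith)
    split_ifs <;> omega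
  · have h0 : -m ≤ b * m / A := (Int.le_ediv_iff_mul_le hA).mpr (by nlinarith)
    have h1 : b * m / A < 0 := (Int.ediv_lt_iff_lt_mul hA).mpr (by nlinarith)
    split_ifs <;> omega

theorem digitSucc_max_mem_Ico_of_pos (hb : 0 < b) (hbA : b < A) {m : ℤ} (hm : 0 < m) :
    digitSucc A b (fun s => max (s - 1) 0) m ∈ Set.Ico 0 m := by
  have hA : 0 < A := hb.trans hbA
  have hm' := Int.mul_ediv_add_emod m A
  have hs0 := Int.emod_nonneg m hA.ne'
  have hsA := Int.emod_lt_of_pos m hA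
  rw [digitSucc]
  generalize m / A = q at hm' ⊢
  generalize m % A = s at hm' hs0 hsA ⊢
  have hq : 0 ≤ q := by nlinarith
  rcases hq.eq_or_lt with rfl | hq
  · simp only [mul_zero, zero_add, Set.mem_Ico] at hm' ⊢
    omega
  · have hk : max (s - 1) 0 ≤ s := max_le (by omega) hs0
    constructor <;> nlinarith [le_max_right (s - 1) 0]

theorem lt_digitSucc_max_of_neg (hb : 0 < b) (hbA : b + 2 ≤ A) {m : ℤ} (hm : m < 0) :
    m < digitSucc A b (fun s => max (s - 1) 0) m ∧
      digitSucc A b (fun s => max (s - 1) 0) m < A := by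
  have hA : 0 < A := by omega
  have hm' := Int.mul_ediv_add_emod m A
  have hs0 := Int.emod_nonneg m hA.ne'
  have hsA := Int.emod_lt_of_pos m hA
  rw [digitSucc]
  generalize m / A = q at hm' ⊢
  generalize m % A = s at hm' hs0 hsA ⊢
  have hq : q ≤ -1 := by nlinarith
  have hk : max (s - 1) 0 ≤ A - 2 := max_le (by omega) (by omega)
  constructor <;> nlinarith [le_max_left (s - 1) 0]

theorem exists_descent_of_pos (hb : 0 < b) (hbA : b + 2 ≤ A) :
    ∃ μ : ℤ → ℕ, ∀ m ≠ 0, μ (digitSucc A b (fun s => max (s - 1) 0) m) < μ m := by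
  refine ⟨fun m => if 0 ≤ m then m.toNat else (A - m).toNat, fun m hm => ?_⟩
  rcases hm.lt_or_gt with hm | hm
  · have := lt_digitSucc_max_of_neg hb hbA hm
    dsimp only
    split_ifs <;> omega
  · have := digitSucc_max_mem_Ico_of_pos hb (by omega : b < A) hm
    simp only [Set.mem_Ico] at this
    dsimp only
    split_ifs <;> omega

theorem exists_digitSet_descent (hb : b ≠ 0) (hbA : |b| < A) (hne : A ≠ b + 1) :
    ∃ k : ℤ → ℤ, k 0 = 0 ∧ ∃ μ : ℤ → ℕ, ∀ m ≠ 0, μ (digitSucc A b k m) < μ m := by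
  rcases hb.lt_or_gt with hb | hb
  · exact ⟨_, by simp, exists_descent_of_neg hb (by rwa [abs_of_neg hb] at hbA)⟩
  · exact ⟨_, by simp, exists_descent_of_pos hb (by rw [abs_of_pos hb] at hbA; omega)⟩

end Descent

/-- Let `α = a/b` with `a ∈ ℕ`, `b ∈ ℤ`, `a > |b| ≥ 1`, `gcd(a,b) = 1` and `a ≠ b + 1`.
Then `α ∈ 𝓕_a`, and one can choose `S ⊆ ℤ` with `0 ∈ S`, `Card(S) = a` and `ℤ[α] = S[α]`. -/
theorem rational_number_system (a : ℕ) (b : ℤ) (h1 : 1 ≤ |b|) (h2 : |b| < (a : ℤ))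
    (hgcd : Int.gcd (a : ℤ) b = 1) (hne : (a : ℤ) ≠ b + 1) :
    memF ((a : ℂ) / (b : ℂ)) a ∧
    ∃ S : Finset ℤ, (0 : ℤ) ∈ S ∧ S.card = a ∧
      repSet ((a : ℂ) / (b : ℂ)) ((fun m : ℤ => (m : ℂ)) '' ↑S) =
        Zadj ((a : ℂ) / (b : ℂ)) := by
  have hb : b ≠ 0 := by rintro rfl; simp at h1
  have hab : IsCoprime (a : ℤ) b := Int.isCoprime_iff_gcd_eq_one.mpr hgcd
  have hA : 0 < (a : ℤ) := (abs_nonneg b).trans_lt h2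
  obtain ⟨k, hk, μ, hμ⟩ := exists_digitSet_descent hb h2 hne
  have hD := repSet_digitSet_eq_Zadj hA hb hab hk hμ
  rw [Int.cast_natCast] at hD
  have hcard : (digitSet a b k).card = a := by simp [card_digitSet hab]
  refine ⟨⟨⟨(digitSet a b k).image Int.cast, ?_, ?_⟩, le_card_of_repSet_eq_Zadj hb hab⟩,
    digitSet a b k, zero_mem_digitSet hA hk, hcard, hD⟩
  · rw [Finset.card_image_of_injective _ Int.cast_injective, hcard]
  · rwa [Finset.coe_image]
end

section
/- Let α = a/b where a ∈ ℕ, b ∈ ℤ, a > |b| ≥ 1, gcd(a, b) = 1 and a = b + 1. Then α ∈ 𝓕_{2a−1} (note |M_α(0)| = a since M_α(x) = bx − a), and moreover one can choose a set S ⊆ ℤ with 0 ∈ S, Card(S) = 2a − 1, and ℤ[α] = S[α]; explicitly S = {−a+1, …, a−1} works, and no finite set of smaller cardinality works. -/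
open Polynomial

/-!
Since `a = α b`, an integer coefficient `c = a q + r` with `0 ≤ r < a` can be replaced by the
digit `r` plus a carry `b q` to the next power of `α`. For `c ≥ a` the carry is smaller than `c`,
and for a polynomial of positive degree carrying lowers the degree, so the digits `|r| < a`
expand all of `ℤ[α]`.

Conversely, as `a/b` is in lowest terms, `P(α) ↦ P(0) mod a` is well defined on `ℤ[α]`
(rational root theorem) and kills `α`: the first digit of any expansion of `z` has the residue
of `z`, so the digits in `S` meet every class mod `a`. Since `b ≡ -1 (mod a)` and
`-b s = s + α (-b s)`, a nonzero digit `s` alone in its class would force every expansion of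
`-b s` to begin with `s`, forever. So each of the `a - 1` nonzero classes holds two digits.
-/

namespace RationalSuccCase

theorem two_mul_card_sub_one_le_card {ι β : Type*} [Fintype β] [DecidableEq β]
    (S : Finset ι) (φ : ι → β) (y₀ : β) (hsurj : ∀ y, ∃ x ∈ S, φ x = y)
    (hpair : ∀ x ∈ S, φ x ≠ y₀ → ∃ x' ∈ S, x' ≠ x ∧ φ x' = φ x) :
    2 * Fintype.card β - 1 ≤ S.card := by
  have hfiber : ∀ y, 2 ≤ (S.filter (φ · = y)).card + if y = y₀ then 1 else 0 := by
    intro y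
    obtain ⟨x, hx, rfl⟩ := hsurj y
    by_cases hy : φ x = y₀
    · have : 0 < (S.filter (φ · = φ x)).card := Finset.card_pos.2 ⟨x, by simp [hx]⟩
      rw [if_pos hy]
      omega
    · obtain ⟨x', hx', hne, hφ⟩ := hpair x hx hy
      rw [if_neg hy]
      have : 1 < (S.filter (φ · = φ x)).card :=
        Finset.one_lt_card.2 ⟨x', by simp [hx', hφ], x, by simp [hx], hne⟩
      omega
  have hsum := Finset.sum_le_sum fun y (_ : y ∈ Finset.univ) => hfiber y
  rw [Finset.sum_add_distrib, ← Finset.card_eq_sum_card_fiberwise (by simp),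
    Finset.sum_ite_eq', Finset.sum_const, Finset.card_univ] at hsum
  simp only [smul_eq_mul, Finset.mem_univ, if_true] at hsum
  omega

variable {α : ℂ} {F : Set ℂ}

theorem Zadj_eq_range (α : ℂ) : Zadj α = ((aeval α : ℤ[X] →ₐ[ℤ] ℂ).range : Set ℂ) :=
  (AlgHom.coe_range _).symm

theorem intCast_mem_Zadj (α : ℂ) (m : ℤ) : (m : ℂ) ∈ Zadj α := ⟨C m, by simp⟩

theorem sum_range_succ_mul_pow (α : ℂ) (f : ℕ → ℂ) (n : ℕ) :
    ∑ j ∈ Finset.range (n + 1), f j * α ^ j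
      = f 0 + α * ∑ j ∈ Finset.range n, f (j + 1) * α ^ j := by
  rw [Finset.sum_range_succ', Finset.mul_sum, add_comm]
  simp only [pow_zero, mul_one, pow_succ']
  congr 1
  exact Finset.sum_congr rfl fun j _ => by ring

theorem mem_repSet_of_mem {r : ℂ} (hr : r ∈ F) : r ∈ repSet α F :=
  ⟨0, fun _ => r, fun _ _ => hr, by simp⟩

theorem add_mul_mem_repSet {r z : ℂ} (hr : r ∈ F) (hz : z ∈ repSet α F) :
    r + α * z ∈ repSet α F := by
  obtain ⟨n, f, hf, rfl⟩ := hz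
  refine ⟨n + 1, fun j => if j = 0 then r else f (j - 1), fun j hj => ?_, ?_⟩
  · dsimp only
    split_ifs
    · exact hr
    · exact hf (j - 1) (by omega)
  · rw [sum_range_succ_mul_pow α (fun j => if j = 0 then r else f (j - 1)) (n + 1)]
    simp

theorem neg_mem_repSet (hF : ∀ x ∈ F, -x ∈ F) {z : ℂ} (hz : z ∈ repSet α F) :
    -z ∈ repSet α F := by
  obtain ⟨n, f, hf, rfl⟩ := hz
  exact ⟨n, fun j => -f j, fun j hj => hF _ (hf j hj), by simp [Finset.sum_neg_distrib]⟩

theorem notMem_repSet_of_forced_digit {s z : ℂ} (hα : α ≠ 0) (hs : s ≠ 0)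
    (hz : z = s + α * z) (hforced : ∀ (n : ℕ) (f : ℕ → ℂ), (∀ j ≤ n, f j ∈ F) →
      z = ∑ j ∈ Finset.range (n + 1), f j * α ^ j → f 0 = s) :
    z ∉ repSet α F := by
  rintro ⟨n, f, hf, hsum⟩
  induction n generalizing f with
  | zero =>
    simp only [zero_add, Finset.range_one, Finset.sum_singleton, pow_zero, mul_one] at hsum
    rw [hsum, hforced 0 f hf (by simpa using hsum)] at hz
    exact hs (by simpa [hα] using hz)
  | succ n ih =>
    have hrest := hsum
    rw [sum_range_succ_mul_pow, hforced _ f hf hsum, hz, add_right_inj] at hrest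
    exact ih (fun j => f (j + 1)) (fun j hj => hf (j + 1) (by omega))
      (mul_left_cancel₀ hα hrest)

theorem sum_mul_pow_mem_Zadj {n : ℕ} {f : ℕ → ℂ} (hf : ∀ j < n, f j ∈ Zadj α) :
    ∑ j ∈ Finset.range n, f j * α ^ j ∈ Zadj α := by
  have hα : α ∈ (aeval α : ℤ[X] →ₐ[ℤ] ℂ).range := ⟨X, aeval_X α⟩
  rw [Zadj_eq_range] at hf ⊢
  exact Subalgebra.sum_mem _ fun j hj =>
    Subalgebra.mul_mem _ (hf j (Finset.mem_range.mp hj)) (Subalgebra.pow_mem _ hα _)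

theorem repSet_subset_Zadj (hF : F ⊆ Zadj α) : repSet α F ⊆ Zadj α := by
  rintro _ ⟨n, f, hf, rfl⟩
  exact sum_mul_pow_mem_Zadj fun j hj => hF (hf j (by omega))

section Expansion

variable {a : ℕ} {b : ℤ} (hb : 0 < b) (hba : b < a) (hα : (b : ℂ) * α = a)
  (hF : ∀ m : ℤ, |m| < a → (m : ℂ) ∈ F)
include hb hba hα hF

theorem natCast_mem_repSet (N : ℕ) : (N : ℂ) ∈ repSet α F := by
  lift b to ℕ using hb.le
  norm_cast at hba
  push_cast at hα
  induction N using Nat.strong_induction_on with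
  | _ N ih =>
  by_cases hN : N < a
  · exact mem_repSet_of_mem (by exact_mod_cast hF N (by rw [abs_of_nonneg] <;> omega))
  have hq : 0 < N / a := Nat.div_pos (by omega) (by omega)
  have hdiv := Nat.div_add_mod N a
  have hcarry : (N : ℂ) = (N % a : ℕ) + α * (b * (N / a) : ℕ) := by
    have hN : (N : ℂ) = a * (N / a : ℕ) + (N % a : ℕ) := by exact_mod_cast hdiv.symm
    rw [hN, ← hα]
    push_cast
    ring
  rw [hcarry]
  have hdigit : |((N % a : ℕ) : ℤ)| < a := by
    rw [abs_of_nonneg (by positivity)]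
    exact_mod_cast Nat.mod_lt _ (by omega)
  have hsmaller : b * (N / a) < N := by
    have := Nat.mul_lt_mul_of_pos_right hba hq
    omega
  exact add_mul_mem_repSet (by exact_mod_cast hF _ hdigit) (ih _ hsmaller)

theorem intCast_mem_repSet (hneg : ∀ x ∈ F, -x ∈ F) (m : ℤ) :
    (m : ℂ) ∈ repSet α F := by
  obtain ⟨N, rfl | rfl⟩ := Int.eq_nat_or_neg m
  · exact_mod_cast natCast_mem_repSet hb hba hα hF N
  · push_cast
    exact neg_mem_repSet hneg (natCast_mem_repSet hb hba hα hF N)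

theorem aeval_mem_repSet (hneg : ∀ x ∈ F, -x ∈ F) (P : ℤ[X]) :
    aeval α P ∈ repSet α F := by
  induction hd : P.natDegree using Nat.strong_induction_on generalizing P with
  | _ d ih =>
  obtain rfl | hd0 := eq_or_ne d 0
  · rw [eq_C_of_natDegree_eq_zero hd, aeval_C, algebraMap_int_eq, eq_intCast]
    exact intCast_mem_repSet hb hba hα hF hneg _
  set c := P.coeff 0
  have ha : (0 : ℤ) < a := hb.trans hba
  have hcarry : aeval α P = ((c % a : ℤ) : ℂ) + α * aeval α (divX P + C (b * (c / a))) := by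
    have hc : (c : ℂ) = ((c % a : ℤ) : ℂ) + a * ((c / a : ℤ) : ℂ) := by
      exact_mod_cast (Int.emod_add_mul_ediv c a).symm
    conv_lhs => rw [← divX_mul_X_add P]
    simp only [map_add, map_mul, aeval_X, eq_intCast, map_intCast]
    rw [hc, ← hα]
    ring
  rw [hcarry]
  refine add_mul_mem_repSet (hF _ ?_) (ih _ ?_ _ rfl)
  · rw [abs_of_nonneg (Int.emod_nonneg c ha.ne')]
    exact Int.emod_lt_of_pos c ha
  · rw [natDegree_add_C, natDegree_divX_eq_natDegree_tsub_one, hd]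
    omega

theorem repSet_eq_Zadj (hneg : ∀ x ∈ F, -x ∈ F) (hFZ : F ⊆ Zadj α) :
    repSet α F = Zadj α := by
  refine (repSet_subset_Zadj hFZ).antisymm ?_
  rintro _ ⟨P, rfl⟩
  exact aeval_mem_repSet hb hba hα hF hneg P

end Expansion

theorem dvd_coeff_zero_of_aeval_eq_zero {a b : ℤ} (hab : IsCoprime a b) (hα : (b : ℂ) * α = a)
    {P : ℤ[X]} (hP : aeval α P = 0) : a ∣ P.coeff 0 := by
  have hQ : (aeval (a : ℂ) (scaleRoots P b) : ℂ) = 0 := by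
    rw [← hα]
    exact scaleRoots_aeval_eq_zero hP
  have hQ' : (scaleRoots P b).eval a = 0 := by
    have h := aeval_algebraMap_apply_eq_algebraMap_eval (A := ℂ) a (scaleRoots P b)
    simp only [algebraMap_int_eq, eq_intCast] at h
    exact_mod_cast h ▸ hQ
  have hdvd := sub_dvd_eval_sub a 0 (scaleRoots P b)
  rw [hQ', sub_zero, zero_sub, dvd_neg, ← coeff_zero_eq_eval_zero, coeff_scaleRoots] at hdvd
  exact hab.pow_right.dvd_of_dvd_mul_right hdvd

open Classical in
/-- `P(α) ↦ P(0) mod a` on `ℤ[α]`, and `0` off `ℤ[α]`; independent of the choice of `P` when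
`α = a/b` in lowest terms (`residueMod_aeval`). -/
noncomputable def residueMod (α : ℂ) (a : ℕ) (z : ℂ) : ZMod a :=
  if h : ∃ P : ℤ[X], aeval α P = z then (h.choose.coeff 0 : ZMod a) else 0

section Residue

variable {a : ℕ} {b : ℤ} (hab : IsCoprime (a : ℤ) b) (hα : (b : ℂ) * α = a)
include hab hα

theorem residueMod_aeval (P : ℤ[X]) : residueMod α a (aeval α P) = P.coeff 0 := by
  have h : ∃ Q : ℤ[X], aeval α Q = aeval α P := ⟨P, rfl⟩
  rw [residueMod, dif_pos h, ZMod.intCast_eq_intCast_iff_dvd_sub, ← coeff_sub]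
  exact dvd_coeff_zero_of_aeval_eq_zero hab hα (by rw [map_sub, h.choose_spec, sub_self])

theorem residueMod_intCast (m : ℤ) : residueMod α a m = m := by
  simpa using residueMod_aeval hab hα (C m)

theorem residueMod_intCast_mul (m : ℤ) {z : ℂ} (hz : z ∈ Zadj α) :
    residueMod α a (m * z) = m * residueMod α a z := by
  obtain ⟨P, rfl⟩ := hz
  have h : (m : ℂ) * aeval α P = aeval α (C m * P) := by simp
  rw [h, residueMod_aeval hab hα, residueMod_aeval hab hα]
  simp

theorem residueMod_add_mul_self {z w : ℂ} (hz : z ∈ Zadj α) (hw : w ∈ Zadj α) :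
    residueMod α a (z + α * w) = residueMod α a z := by
  obtain ⟨P, rfl⟩ := hz
  obtain ⟨Q, rfl⟩ := hw
  have h : aeval α P + α * aeval α Q = aeval α (P + X * Q) := by simp
  rw [h, residueMod_aeval hab hα, residueMod_aeval hab hα]
  simp

theorem residueMod_sum_mul_pow {n : ℕ} {f : ℕ → ℂ} (hf : ∀ j ≤ n, f j ∈ Zadj α) :
    residueMod α a (∑ j ∈ Finset.range (n + 1), f j * α ^ j) = residueMod α a (f 0) := by
  rw [sum_range_succ_mul_pow]
  exact residueMod_add_mul_self hab hα (hf 0 n.zero_le)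
    (sum_mul_pow_mem_Zadj fun j hj => hf (j + 1) hj)

theorem exists_residueMod_eq {S : Finset ℂ} (hS : repSet α S = Zadj α) (r : ZMod a) :
    ∃ s ∈ S, residueMod α a s = r := by
  obtain ⟨m, rfl⟩ := ZMod.intCast_surjective r
  have hm : (m : ℂ) ∈ repSet α S := hS ▸ intCast_mem_Zadj α m
  obtain ⟨n, f, hf, hsum⟩ := hm
  refine ⟨f 0, hf 0 n.zero_le, ?_⟩
  have hfZ : ∀ j ≤ n, f j ∈ Zadj α := fun j hj => hS ▸ mem_repSet_of_mem (hf j hj)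
  rw [← residueMod_sum_mul_pow hab hα hfZ, ← hsum, residueMod_intCast hab hα]

end Residue

section SuccCase

variable {a : ℕ} {b : ℤ} (hb : 0 < b) (hab : (a : ℤ) = b + 1) (hα : (b : ℂ) * α = a)
include hb hab hα

theorem exists_ne_residueMod_eq {S : Finset ℂ} (hS : repSet α S = Zadj α) {s : ℂ}
    (hs : s ∈ S) (hs0 : s ≠ 0) : ∃ t ∈ S, t ≠ s ∧ residueMod α a t = residueMod α a s := by
  have hcop : IsCoprime (a : ℤ) b := ⟨1, -1, by rw [hab]; ring⟩
  have hα0 : α ≠ 0 := by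
    rintro rfl
    rw [mul_zero, eq_comm, Nat.cast_eq_zero] at hα
    omega
  have haC : (a : ℂ) = b + 1 := by exact_mod_cast hab
  have hbZ : ((b : ℤ) : ZMod a) = -1 := by
    rw [eq_neg_iff_add_eq_zero, ← Int.cast_one, ← Int.cast_add, ← hab]
    simp
  have hSZ : (S : Set ℂ) ⊆ Zadj α := hS ▸ fun x hx => mem_repSet_of_mem hx
  by_contra! huniq
  refine notMem_repSet_of_forced_digit hα0 hs0 (z := ((-b : ℤ) : ℂ) * s) ?_ ?_
    (hS ▸ ?_ : ((-b : ℤ) : ℂ) * s ∈ repSet α S)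
  · push_cast
    linear_combination s * hα + s * haC
  · intro n f hf hsum
    by_contra hne
    refine huniq (f 0) (hf 0 n.zero_le) hne ?_
    rw [← residueMod_sum_mul_pow hcop hα fun j hj => hSZ (hf j hj), ← hsum,
      residueMod_intCast_mul hcop hα _ (hSZ hs), Int.cast_neg, hbZ, neg_neg, one_mul]
  · obtain ⟨P, rfl⟩ := hSZ hs
    exact ⟨C (-b) * P, by simp⟩

theorem card_le_of_repSet_eq_Zadj (S : Finset ℂ) (hS : repSet α S = Zadj α) :
    2 * a - 1 ≤ S.card := by
  classical
  have hcop : IsCoprime (a : ℤ) b := ⟨1, -1, by rw [hab]; ring⟩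
  have hzero : residueMod α a 0 = 0 := by
    simpa using residueMod_intCast hcop hα 0
  have : NeZero a := ⟨by omega⟩
  simpa using two_mul_card_sub_one_le_card S (residueMod α a) 0 (exists_residueMod_eq hcop hα hS)
    fun s hs hs0 => exists_ne_residueMod_eq hb hab hα hS hs (by rintro rfl; exact hs0 hzero)

end SuccCase

end RationalSuccCase

open RationalSuccCase in
theorem rational_succ_case_general (a : ℕ) (b : ℤ) (h1 : 1 ≤ |b|) (h2 : |b| < (a : ℤ))
    (heq : (a : ℤ) = b + 1) :
    memF ((a : ℂ) / (b : ℂ)) (2 * a - 1) ∧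
    ((0 : ℤ) ∈ Finset.Icc (-(a : ℤ) + 1) ((a : ℤ) - 1) ∧
      (Finset.Icc (-(a : ℤ) + 1) ((a : ℤ) - 1)).card = 2 * a - 1 ∧
      repSet ((a : ℂ) / (b : ℂ))
          ((fun m : ℤ => (m : ℂ)) '' ↑(Finset.Icc (-(a : ℤ) + 1) ((a : ℤ) - 1))) =
        Zadj ((a : ℂ) / (b : ℂ))) ∧
    ∀ S : Finset ℂ, S.card < 2 * a - 1 →
      repSet ((a : ℂ) / (b : ℂ)) ↑S ≠ Zadj ((a : ℂ) / (b : ℂ)) := by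
  have hb : 0 < b := by cases abs_cases b <;> omega
  have hα : (b : ℂ) * ((a : ℂ) / (b : ℂ)) = a :=
    mul_div_cancel₀ _ (Int.cast_ne_zero.mpr hb.ne')
  set D := Finset.Icc (-(a : ℤ) + 1) ((a : ℤ) - 1)
  have hmem : ∀ m : ℤ, m ∈ (D : Set ℤ) ↔ |m| < a := fun m => by
    simp only [D, Finset.coe_Icc, Set.mem_Icc]
    cases abs_cases m <;> omega
  have hcard : D.card = 2 * a - 1 := by simp only [D, Int.card_Icc]; omega
  have hrep : repSet ((a : ℂ) / (b : ℂ)) ((fun m : ℤ => (m : ℂ)) '' ↑D) = Zadj _ :=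
    repSet_eq_Zadj hb (by omega) hα (fun m hm => ⟨m, (hmem m).mpr hm, rfl⟩)
      (by rintro _ ⟨m, hm, rfl⟩; exact ⟨-m, by simpa [hmem] using hm, by simp⟩)
      (by rintro _ ⟨m, -, rfl⟩; exact intCast_mem_Zadj _ m)
  have hlower := card_le_of_repSet_eq_Zadj hb heq hα
  refine ⟨⟨⟨D.image (↑), ?_, by rwa [Finset.coe_image]⟩, hlower⟩,
    ⟨by simp only [D, Finset.mem_Icc]; omega, hcard, hrep⟩, fun S hS hrepS => ?_⟩
  · rw [Finset.card_image_of_injective _ Int.cast_injective, hcard]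
  · exact absurd (hlower S hrepS) (by omega)

/-- Let `α = a/b` with `a ∈ ℕ`, `b ∈ ℤ`, `a > |b| ≥ 1`, `gcd(a,b) = 1` and `a = b + 1`.
Then `α ∈ 𝓕_{2a−1}`; explicitly `S = {−a+1, …, a−1}` satisfies `ℤ[α] = S[α]`, `0 ∈ S`,
`Card(S) = 2a − 1`, and no finite set of smaller cardinality works. -/
theorem rational_succ_case (a : ℕ) (b : ℤ) (h1 : 1 ≤ |b|) (h2 : |b| < (a : ℤ))
    (hgcd : Int.gcd (a : ℤ) b = 1) (heq : (a : ℤ) = b + 1) :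
    memF ((a : ℂ) / (b : ℂ)) (2 * a - 1) ∧
    ((0 : ℤ) ∈ Finset.Icc (-(a : ℤ) + 1) ((a : ℤ) - 1) ∧
      (Finset.Icc (-(a : ℤ) + 1) ((a : ℤ) - 1)).card = 2 * a - 1 ∧
      repSet ((a : ℂ) / (b : ℂ))
          ((fun m : ℤ => (m : ℂ)) '' ↑(Finset.Icc (-(a : ℤ) + 1) ((a : ℤ) - 1))) =
        Zadj ((a : ℂ) / (b : ℂ))) ∧
    ∀ S : Finset ℂ, S.card < 2 * a - 1 →
      repSet ((a : ℂ) / (b : ℂ)) ↑S ≠ Zadj ((a : ℂ) / (b : ℂ)) :=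
  rational_succ_case_general a b h1 h2 heq
end

section
/- Let α be a nonzero algebraic number, R a complete residue system mod α in ℤ[α], and J the associated backward division map. Then there exists a positive integer L = L(α, R) such that for each β ∈ ℤ[α] there is a constant c = c(α, β) ∈ ℕ with the property that L · J^{(n)}(β) is an algebraic integer for all n ≥ c. -/
open Polynomial

/-- `R` is a complete residue system mod `α` in `ℤ[α]`: `R ⊆ ℤ[α]` and every `β ∈ ℤ[α]`
is congruent modulo the ideal `αℤ[α]` to exactly one element of `R`. -/
def IsCRS (α : ℂ) (R : Set ℂ) : Prop :=
  R ⊆ Zadj α ∧ ∀ β ∈ Zadj α, ∃! r, r ∈ R ∧ ∃ γ ∈ Zadj α, β - r = α * γ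

/-- `J` is the backward division map associated to the CRS `R`:
for every `β ∈ ℤ[α]`, `J β ∈ ℤ[α]` and `β = r + α · J β` for some `r ∈ R`. -/
def IsJmap (α : ℂ) (R : Set ℂ) (J : ℂ → ℂ) : Prop :=
  ∀ β ∈ Zadj α, J β ∈ Zadj α ∧ ∃ r ∈ R, β = r + α * J β

/-- `℘`: the set of periodic elements of `ℤ[α]` under `J`. -/
def perSet (α : ℂ) (J : ℂ → ℂ) : Set ℂ :=
  {β ∈ Zadj α | ∃ n : ℕ, 1 ≤ n ∧ J^[n] β = β}

/-- The orbit of `β` under `J` is eventually periodic. -/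
def EvPeriodic (J : ℂ → ℂ) (β : ℂ) : Prop :=
  ∃ (k m : ℕ), 1 ≤ m ∧ J^[k + m] β = J^[k] β


/-!
Since `α ≠ 0` is algebraic, `αℤ[α]` contains a nonzero integer `N`, so every element of `ℤ[α]`
is congruent mod `α` to one of `0, …, |N| - 1`; hence `R` is finite and has a common
denominator `L`. Iterating `β = r + α J(β)` gives
`α ^ n J^{(n)}(β) = β - ∑_{k<n} r_k α ^ k` with digits `r_k ∈ R`. If `β = g(α)` and
`n ≥ deg g`, this exhibits `L J^{(n)}(β)` as a polynomial in `α⁻¹` with coefficients in the ring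
`O` of algebraic integers, while it is also a polynomial in `α` over `ℤ`. An element of
`O[α] ∩ O[α⁻¹]` is integral over `O`, since it maps the `O`-span of `α^{-m}, …, α^{m'}` (for
suitable `m, m'`) into itself.
-/

section AdjoinInv

variable {A K : Type*} [CommRing A] [Field K] [Algebra A K] {x a : K}

theorem isIntegral_of_mem_adjoin_of_mem_adjoin_inv (hx : x ≠ 0)
    (ha : a ∈ Algebra.adjoin A {x}) (ha' : a ∈ Algebra.adjoin A {x⁻¹}) : IsIntegral A a := by
  simp only [Algebra.adjoin_singleton_eq_range_aeval, AlgHom.mem_range] at ha ha'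
  obtain ⟨f, rfl⟩ := ha
  obtain ⟨g, hg⟩ := ha'
  -- `aeval x f` maps `x ^ i` back into `M`: use `f` when `i < 0` and `g` when `0 ≤ i`.
  let M : Submodule A K :=
    Submodule.span A ((x ^ ·) '' Set.Icc (-(g.natDegree : ℤ)) f.natDegree)
  have hM (e : ℤ) (h₁ : -(g.natDegree : ℤ) ≤ e) (h₂ : e ≤ f.natDegree) : x ^ e ∈ M :=
    Submodule.subset_span ⟨e, ⟨h₁, h₂⟩, rfl⟩
  refine isIntegral_of_smul_mem_submodule M ?_ (Submodule.fg_span ((Set.finite_Icc _ _).image _))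
    _ fun m hm => ?_
  · exact (Submodule.ne_bot_iff M).2 ⟨1, by simpa using hM 0 (by omega) (by omega), one_ne_zero⟩
  induction hm using Submodule.span_induction with
  | mem _ hm =>
    obtain ⟨i, ⟨hi₁, hi₂⟩, rfl⟩ := hm
    rw [smul_eq_mul]
    rcases lt_or_ge i 0 with hi | hi
    · rw [aeval_eq_sum_range, Finset.sum_mul]
      refine Submodule.sum_mem _ fun s hs => ?_
      rw [smul_mul_assoc, ← zpow_natCast, ← zpow_add₀ hx]
      exact M.smul_mem _ (hM _ (by omega) (by simp at hs; omega))
    · rw [← hg, aeval_eq_sum_range, Finset.sum_mul]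
      refine Submodule.sum_mem _ fun k hk => ?_
      rw [smul_mul_assoc, inv_pow, ← zpow_natCast, ← zpow_neg, ← zpow_add₀ hx]
      exact M.smul_mem _ (hM _ (by simp at hk; omega) (by omega))
  | zero => simp
  | add _ _ _ _ h₁ h₂ => rw [smul_add]; exact M.add_mem h₁ h₂
  | smul c _ _ h => rw [smul_comm]; exact M.smul_mem c h

theorem mem_adjoin_inv_of_pow_mul_eq_aeval (hx : x ≠ 0) {p : A[X]} {n : ℕ}
    (hp : p.natDegree ≤ n) (h : x ^ n * a = aeval x p) : a ∈ Algebra.adjoin A {x⁻¹} := by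
  let := invertibleOfNonzero hx
  have hreflect := eval₂_reflect_mul_pow (algebraMap A K) x n p hp
  rw [← aeval_def, ← aeval_def, invOf_eq_inv, ← h, mul_comm] at hreflect
  rw [← mul_left_cancel₀ (pow_ne_zero n hx) hreflect]
  exact aeval_mem_adjoin_singleton A x⁻¹

end AdjoinInv

theorem sum_range_sub_mul_succ_mul_pow {S : Type*} [CommRing S] (x : S) (b : ℕ → S) (n : ℕ) :
    ∑ k ∈ Finset.range n, (b k - x * b (k + 1)) * x ^ k = b 0 - x ^ n * b n := by
  have := Finset.sum_range_sub' (fun k => x ^ k * b k) n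
  simp only [pow_zero, one_mul] at this
  rw [← this]
  exact Finset.sum_congr rfl fun k _ => by ring

theorem IsAlgebraic.exists_pos_nat_isIntegral_mul {S : Type*} [CommRing S] {z : S}
    (hz : IsAlgebraic ℤ z) : ∃ N : ℕ, 0 < N ∧ IsIntegral ℤ ((N : S) * z) := by
  obtain ⟨y, hy, hyz⟩ := hz.exists_integral_multiple
  refine ⟨y.natAbs, Int.natAbs_pos.2 hy, ?_⟩
  have : (y.natAbs : S) * z = (y.sign : S) * (y • z) := by
    rw [zsmul_eq_mul, ← mul_assoc, ← Int.cast_mul, Int.sign_mul_self, Int.cast_natCast]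
  rw [this]
  exact (isIntegral_intCast _).mul hyz

theorem Set.Finite.exists_pos_nat_isIntegral_mul {S : Type*} [CommRing S] {s : Set S}
    (hs : s.Finite) (halg : ∀ z ∈ s, IsAlgebraic ℤ z) :
    ∃ L : ℕ, 0 < L ∧ ∀ z ∈ s, IsIntegral ℤ ((L : S) * z) := by
  classical
  choose! N hN hNz using fun z hz => (halg z hz).exists_pos_nat_isIntegral_mul
  refine ⟨∏ z ∈ hs.toFinset, N z, Finset.prod_pos fun z hz => hN z (hs.mem_toFinset.1 hz),
    fun z hz => ?_⟩
  rw [← Finset.mul_prod_erase _ _ (hs.mem_toFinset.2 hz), Nat.cast_mul, mul_comm (N z : S),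
    mul_assoc]
  exact (isIntegral_natCast _).mul (hNz z hz)

theorem mem_Zadj_iff {α z : ℂ} : z ∈ Zadj α ↔ z ∈ Algebra.adjoin ℤ {α} := by
  rw [Algebra.adjoin_singleton_eq_range_aeval]
  rfl

theorem isAlgebraic_of_mem_Zadj {α z : ℂ} (hα : IsAlgebraic ℤ α) (hz : z ∈ Zadj α) :
    IsAlgebraic ℤ z :=
  Algebra.adjoin_le (S := Subalgebra.algebraicClosure ℤ ℂ) (Set.singleton_subset_iff.2 hα)
    (mem_Zadj_iff.1 hz)

theorem mem_adjoin_integralClosure_of_mem_adjoin_int {α z : ℂ} (hz : z ∈ Algebra.adjoin ℤ {α}) :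
    z ∈ Algebra.adjoin (integralClosure ℤ ℂ) {α} := by
  have hle : Algebra.adjoin ℤ {α} ≤
      (Algebra.adjoin (integralClosure ℤ ℂ) {α}).restrictScalars ℤ := Algebra.adjoin_le (by simp)
  exact hle hz

section Residues

variable {α : ℂ}

theorem exists_congr_intCast_mem_Ico (hα : IsAlgebraic ℤ α) (h0 : α ≠ 0) :
    ∃ N : ℤ, ∀ z ∈ Algebra.adjoin ℤ {α}, ∃ t ∈ Set.Ico 0 N,
      ∃ γ ∈ Algebra.adjoin ℤ {α}, z - t = α * γ := by
  -- `a = α * u` is a nonzero integer in `αℤ[α]`; reduce the constant term modulo `a`.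
  obtain ⟨u, hu, a, ha, hau⟩ :=
    hα.exists_nonzero_eq_adjoin_mul (mem_nonZeroDivisors_of_ne_zero h0)
  refine ⟨|a|, fun z hz => ?_⟩
  rw [Algebra.adjoin_singleton_eq_range_aeval] at hz
  obtain ⟨P, rfl⟩ := hz
  obtain ⟨Q, hQ⟩ := X_dvd_sub_C (p := P)
  refine ⟨P.coeff 0 % a, ⟨Int.emod_nonneg _ ha, Int.emod_lt_abs _ ha⟩,
    aeval α Q + u * (P.coeff 0 / a : ℤ), ?_, ?_⟩
  · exact add_mem (aeval_mem_adjoin_singleton ℤ α) (mul_mem hu (intCast_mem _ _))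
  · have hP := congrArg (aeval α) hQ
    simp only [map_sub, map_mul, aeval_X, map_intCast, algebraMap_int_eq, eq_intCast] at hP hau
    have hdiv : ((P.coeff 0 % a : ℤ) : ℂ) = P.coeff 0 - a * (P.coeff 0 / a : ℤ) := by
      rw [Int.emod_def]; push_cast; ring
    rw [hdiv, ← hau]
    linear_combination hP

theorem IsCRS.finite (hα : IsAlgebraic ℤ α) (h0 : α ≠ 0) {R : Set ℂ} (hR : IsCRS α R) :
    R.Finite := by
  obtain ⟨N, hN⟩ := exists_congr_intCast_mem_Ico hα h0
  choose! t ht γ hγ hzt using fun z (hz : z ∈ R) => hN z (mem_Zadj_iff.1 (hR.1 hz))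
  refine Set.Finite.of_finite_image (f := t) ((Set.finite_Ico 0 N).subset ?_)
    fun r hr r' hr' he => ?_
  · rintro _ ⟨r, hr, rfl⟩
    exact ht r hr
  -- `r` and `r'` are both residues of `r`, so they coincide.
  obtain ⟨s, -, hs⟩ := hR.2 r (hR.1 hr)
  have hcast : (t r : ℂ) = t r' := congrArg _ he
  refine (hs r ⟨hr, 0, mem_Zadj_iff.2 (zero_mem _), by ring⟩).trans
    (hs r' ⟨hr', γ r - γ r', mem_Zadj_iff.2 (sub_mem (hγ r hr) (hγ r' hr')), ?_⟩).symm
  linear_combination hzt r hr - hzt r' hr' + hcast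

end Residues

section Iterates

variable {α : ℂ} {R : Set ℂ} {J : ℂ → ℂ} {β : ℂ}

theorem IsJmap.iterate_mem (hJ : IsJmap α R J) (hβ : β ∈ Zadj α) (n : ℕ) : J^[n] β ∈ Zadj α := by
  induction n with
  | zero => exact hβ
  | succ n ih => rw [Function.iterate_succ_apply']; exact (hJ _ ih).1

theorem IsJmap.iterate_sub_mul_iterate_succ_mem (hJ : IsJmap α R J) (hβ : β ∈ Zadj α) (k : ℕ) :
    J^[k] β - α * J^[k + 1] β ∈ R := by
  obtain ⟨r, hr, hkr⟩ := (hJ _ (hJ.iterate_mem hβ k)).2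
  convert hr using 1
  rw [Function.iterate_succ_apply']
  linear_combination hkr

theorem IsJmap.natCast_mul_iterate_mem_adjoin_inv (hJ : IsJmap α R J) (h0 : α ≠ 0) {L : ℕ}
    (hLR : ∀ r ∈ R, IsIntegral ℤ ((L : ℂ) * r)) {g : ℤ[X]} (hg : aeval α g = β) {n : ℕ}
    (hn : g.natDegree ≤ n) :
    (L : ℂ) * J^[n] β ∈ Algebra.adjoin (integralClosure ℤ ℂ) {α⁻¹} := by
  set O := integralClosure ℤ ℂ
  have hβ : β ∈ Zadj α := ⟨g, hg⟩
  let digit (k : ℕ) : O :=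
    ⟨L * (J^[k] β - α * J^[k + 1] β), hLR _ (hJ.iterate_sub_mul_iterate_succ_mem hβ k)⟩
  -- `α ^ n * (L * J^[n] β) = L * β - ∑ k < n, digit k * α ^ k`
  refine mem_adjoin_inv_of_pow_mul_eq_aeval h0 (n := n)
    (p := C (L : O) * g.map (algebraMap ℤ O) - ∑ k ∈ Finset.range n, C (digit k) * X ^ k) ?_ ?_
  · refine natDegree_sub_le_of_le ((natDegree_C_mul_le _ _).trans (natDegree_map_le.trans hn))
      (natDegree_sum_le_of_forall_le _ _ fun k hk => ?_) |>.trans (max_self n).le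
    exact (natDegree_C_mul_X_pow_le _ _).trans (Finset.mem_range.1 hk).le
  · have hdigit (k : ℕ) : algebraMap O ℂ (digit k) = L * (J^[k] β - α * J^[k + 1] β) := rfl
    have htelescope := sum_range_sub_mul_succ_mul_pow α (J^[·] β) n
    simp only [map_sub, map_mul, map_sum, aeval_C, aeval_X_pow, aeval_map_algebraMap, hg, hdigit,
      map_natCast, mul_assoc, ← Finset.mul_sum, htelescope, Function.iterate_zero_apply]
    ring

end Iterates

/-- Proposition 2: there is a positive integer `L = L(α, R)` such that for each
`β ∈ ℤ[α]` there is `c = c(α, β) ∈ ℕ` with `L · J^{(n)}(β)` an algebraic integer for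
all `n ≥ c`. -/
theorem exists_denominator_bound (α : ℂ) (hα : IsAlgebraic ℚ α) (h0 : α ≠ 0)
    (R : Set ℂ) (hR : IsCRS α R) (J : ℂ → ℂ) (hJ : IsJmap α R J) :
    ∃ L : ℕ, 0 < L ∧ ∀ β ∈ Zadj α, ∃ c : ℕ, ∀ n ≥ c,
      IsIntegral ℤ ((L : ℂ) * J^[n] β) := by
  have hαℤ : IsAlgebraic ℤ α := (IsFractionRing.isAlgebraic_iff ℤ ℚ ℂ).2 hα
  obtain ⟨L, hL, hLR⟩ := (hR.finite hαℤ h0).exists_pos_nat_isIntegral_mul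
    fun r hr => isAlgebraic_of_mem_Zadj hαℤ (hR.1 hr)
  refine ⟨L, hL, fun β hβ => ?_⟩
  obtain ⟨g, hg⟩ := id hβ
  refine ⟨g.natDegree, fun n hn => isIntegral_trans (A := integralClosure ℤ ℂ) _ ?_⟩
  refine isIntegral_of_mem_adjoin_of_mem_adjoin_inv h0 ?_
    (hJ.natCast_mul_iterate_mem_adjoin_inv h0 hLR hg hn)
  exact mem_adjoin_integralClosure_of_mem_adjoin_int
    (mul_mem (natCast_mem _ L) (mem_Zadj_iff.1 (hJ.iterate_mem hβ n)))
end
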